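/- arXiv:2405.01357 — 5 statements merged into one kernel-verified Lean document; each statement's English description precedes it below -/
import Mathlib

section
/- Let ω₁, ω₂, ω₃ ∈ ℂ with |ωᵢ| ≤ 1 for i = 1,2,3, and let α₁, α₂, β ∈ ℂ. Consider the upper-triangular matrix T = [[ω₁, α₁, β], [0, ω₂, α₂], [0, 0, ω₃]]. Then ‖T‖ ≤ 1 (operator norm on Euclidean ℂ³) if and only if one of the following holds: (i) |ω₂| < 1, |α₁|² ≤ (1−|ω₁|²)(1−|ω₂|²), |α₂|² ≤ (1−|ω₂|²)(1−|ω₃|²), and |β(1−|ω₂|²) + α₁α₂·conj(ω₂)|² ≤ [(1−|ω₁|²)(1−|ω₂|²) − |α₁|²] · [(1−|ω₂|²)(1−|ω₃|²) − |α₂|²]; or (ii) |ω₂| = 1, α₁ = 0, α₂ = 0, and |β|² ≤ (1−|ω₁|²)(1−|ω₃|²). -/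
/-!
`‖T‖ ≤ 1` says that the defect form `‖v‖² - ‖T v‖²` is nonnegative. Put `b = 1 - |ω₂|²`.
If `b > 0`, the substitution `w = b y - conj ω₂ α₂ z` diagonalises the `(y, z)` part, and `b²` times
the defect form becomes `b²|x|² + b|w|² + b D₂|z|² - |b ω₁ x + α₁ w + E z|²` with
`D₂ = b (1 - |ω₃|²) - |α₂|²` and `E = β b + α₁ α₂ conj ω₂`. By Cauchy–Schwarz, a form
`∑ λᵢ|vᵢ|² - |∑ cᵢ vᵢ|²` is nonnegative iff all `λᵢ ≥ 0`, `cᵢ = 0` where `λᵢ = 0`, and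
`∑ |cᵢ|²/λᵢ ≤ 1`; here this unwinds to the three inequalities of (i).
If `|ω₂| = 1`, the `2 × 2` criterion for the two diagonal corners forces `α₁ = α₂ = 0`, and `T`
splits into `ω₂` and the `2 × 2` matrix `[[ω₁, β], [0, ω₃]]`.
-/

open Finset

theorem forall_norm_sum_mul_sq_le_iff {ι 𝕜 : Type*} [Fintype ι] [RCLike 𝕜] (w : ι → ℝ)
    (c : ι → 𝕜) :
    (∀ v : ι → 𝕜, ‖∑ i, c i * v i‖ ^ 2 ≤ ∑ i, w i * ‖v i‖ ^ 2) ↔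
      (∀ i, 0 ≤ w i ∧ (w i = 0 → c i = 0)) ∧ ∑ i, ‖c i‖ ^ 2 / w i ≤ 1 := by
  classical
  constructor
  · intro h
    have hw : ∀ i, ‖c i‖ ^ 2 ≤ w i := fun i => by
      simpa [Pi.single_apply, apply_ite] using h (Pi.single i 1)
    refine ⟨fun i => ⟨(sq_nonneg _).trans (hw i), fun h0 => by simpa [h0] using hw i⟩, ?_⟩
    set S := ∑ i, ‖c i‖ ^ 2 / w i
    have hv := h fun i => (starRingEnd 𝕜) (c i) / (w i : 𝕜)
    have hnum : ∑ i, c i * ((starRingEnd 𝕜) (c i) / (w i : 𝕜)) = (S : 𝕜) := by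
      simp [S, ← mul_div_assoc, RCLike.mul_conj]
    have hden : ∑ i, w i * ‖(starRingEnd 𝕜) (c i) / (w i : 𝕜)‖ ^ 2 = S := by
      refine sum_congr rfl fun i _ => ?_
      rcases eq_or_ne (w i) 0 with h0 | h0
      · simp [h0]
      · rw [norm_div, RCLike.norm_conj, RCLike.norm_ofReal, div_pow, sq_abs]
        field_simp
    rw [hnum, hden, RCLike.norm_ofReal, sq_abs] at hv
    nlinarith
  · rintro ⟨hw, hS⟩ v
    have hS0 : 0 ≤ ∑ i, w i * ‖v i‖ ^ 2 := sum_nonneg fun i _ => by have := (hw i).1; positivity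
    calc ‖∑ i, c i * v i‖ ^ 2 ≤ (∑ i, ‖c i‖ * ‖v i‖) ^ 2 := by
          gcongr
          exact (norm_sum_le _ _).trans_eq (by simp)
      _ ≤ (∑ i, ‖c i‖ ^ 2 / w i) * ∑ i, w i * ‖v i‖ ^ 2 := by
          refine sum_sq_le_sum_mul_sum_of_sq_le_mul _ (fun i _ => by have := (hw i).1; positivity)
            (fun i _ => by have := (hw i).1; positivity) fun i _ => ?_
          rcases eq_or_ne (w i) 0 with h0 | h0
          · simp [(hw i).2 h0]
          · exact (by field_simp : _ = _).le
      _ ≤ ∑ i, w i * ‖v i‖ ^ 2 := mul_le_of_le_one_left hS0 hS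

theorem nonneg_and_div_le_iff {t e r : ℝ} (he : 0 ≤ e) :
    ((0 ≤ t ∧ (t = 0 → e = 0)) ∧ e / t ≤ r) ↔ 0 ≤ r ∧ 0 ≤ t ∧ e ≤ r * t := by
  rcases lt_trichotomy t 0 with ht | rfl | ht
  · simp [ht.not_ge]
  · simp only [le_refl, true_implies, div_zero, mul_zero, true_and]
    constructor
    · rintro ⟨rfl, hr⟩; exact ⟨hr, le_rfl⟩
    · rintro ⟨hr, he'⟩; exact ⟨le_antisymm he' he, hr⟩
  · rw [div_le_iff₀ ht]
    exact ⟨fun h => ⟨nonneg_of_mul_nonneg_left (he.trans h.2) ht, ht.le, h.2⟩,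
      fun h => ⟨⟨ht.le, fun h0 => absurd h0 ht.ne'⟩, h.2.2⟩⟩

theorem forall_upperTriangular_two_le_iff {ω α γ : ℂ} (hω : ‖ω‖ ≤ 1) (hγ : ‖γ‖ ≤ 1) :
    (∀ y z : ℂ, ‖ω * y + α * z‖ ^ 2 + ‖γ * z‖ ^ 2 ≤ ‖y‖ ^ 2 + ‖z‖ ^ 2) ↔
      ‖α‖ ^ 2 ≤ (1 - ‖ω‖ ^ 2) * (1 - ‖γ‖ ^ 2) := by
  have hweights : (∀ y z : ℂ, ‖ω * y + α * z‖ ^ 2 + ‖γ * z‖ ^ 2 ≤ ‖y‖ ^ 2 + ‖z‖ ^ 2) ↔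
      ∀ v : Fin 2 → ℂ, ‖∑ i, ![ω, α] i * v i‖ ^ 2 ≤ ∑ i, ![1, 1 - ‖γ‖ ^ 2] i * ‖v i‖ ^ 2 := by
    simp only [Fin.forall_fin_succ_pi, Fin.forall_fin_zero_pi, Fin.sum_univ_two]
    refine forall₂_congr fun y z => ?_
    simp only [Fin.cons_zero, Fin.cons_one, Matrix.cons_val_zero, Matrix.cons_val_one, norm_mul]
    constructor <;> intro h <;> linarith
  have hr := nonneg_and_div_le_iff (t := 1 - ‖γ‖ ^ 2) (r := 1 - ‖ω‖ ^ 2) (sq_nonneg ‖α‖)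
  simp only [pow_eq_zero_iff two_ne_zero, norm_eq_zero] at hr
  rw [hweights, forall_norm_sum_mul_sq_le_iff]
  simp only [Fin.forall_fin_two, Fin.sum_univ_two, Matrix.cons_val_zero, Matrix.cons_val_one,
    zero_le_one, one_ne_zero, false_implies, and_self, true_and, div_one, ← le_sub_iff_add_le']
  rw [hr, mul_comm]
  have hω' : 0 ≤ 1 - ‖ω‖ ^ 2 := by nlinarith [norm_nonneg ω]
  have hγ' : 0 ≤ 1 - ‖γ‖ ^ 2 := by nlinarith [norm_nonneg γ]
  tauto

theorem upperTriangular_two_defect_eq (ω α γ y z : ℂ) :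
    (1 - ‖ω‖ ^ 2) * (‖y‖ ^ 2 + ‖z‖ ^ 2 - (‖ω * y + α * z‖ ^ 2 + ‖γ * z‖ ^ 2)) =
      ‖(1 - (‖ω‖ : ℂ) ^ 2) * y - starRingEnd ℂ ω * α * z‖ ^ 2 +
        ((1 - ‖ω‖ ^ 2) * (1 - ‖γ‖ ^ 2) - ‖α‖ ^ 2) * ‖z‖ ^ 2 := by
  have : (‖ω‖ : ℂ) ^ 2 = (Complex.normSq ω : ℂ) := by
    rw [← Complex.ofReal_pow, Complex.sq_norm]
  simp only [this, Complex.sq_norm, Complex.normSq_apply, Complex.mul_re, Complex.mul_im,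
    Complex.add_re, Complex.add_im, Complex.sub_re, Complex.sub_im, Complex.conj_re,
    Complex.conj_im, Complex.ofReal_re, Complex.ofReal_im, Complex.one_re, Complex.one_im]
  ring

theorem upperTriangular_three_defect_eq (ω₁ ω₂ ω₃ α₁ α₂ β x y z : ℂ) :
    (1 - ‖ω₂‖ ^ 2) ^ 2 * (‖x‖ ^ 2 + ‖y‖ ^ 2 + ‖z‖ ^ 2 -
        (‖ω₁ * x + α₁ * y + β * z‖ ^ 2 + ‖ω₂ * y + α₂ * z‖ ^ 2 + ‖ω₃ * z‖ ^ 2)) =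
      (1 - ‖ω₂‖ ^ 2) ^ 2 * ‖x‖ ^ 2 +
        (1 - ‖ω₂‖ ^ 2) * ‖(1 - (‖ω₂‖ : ℂ) ^ 2) * y - starRingEnd ℂ ω₂ * α₂ * z‖ ^ 2 +
        (1 - ‖ω₂‖ ^ 2) * ((1 - ‖ω₂‖ ^ 2) * (1 - ‖ω₃‖ ^ 2) - ‖α₂‖ ^ 2) * ‖z‖ ^ 2 -
        ‖(1 - (‖ω₂‖ : ℂ) ^ 2) * ω₁ * x +
          α₁ * ((1 - (‖ω₂‖ : ℂ) ^ 2) * y - starRingEnd ℂ ω₂ * α₂ * z) +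
          (β * (1 - (‖ω₂‖ : ℂ) ^ 2) + α₁ * α₂ * starRingEnd ℂ ω₂) * z‖ ^ 2 := by
  have hrow : (1 - (‖ω₂‖ : ℂ) ^ 2) * ω₁ * x +
      α₁ * ((1 - (‖ω₂‖ : ℂ) ^ 2) * y - starRingEnd ℂ ω₂ * α₂ * z) +
      (β * (1 - (‖ω₂‖ : ℂ) ^ 2) + α₁ * α₂ * starRingEnd ℂ ω₂) * z =
      ((1 - ‖ω₂‖ ^ 2 : ℝ) : ℂ) * (ω₁ * x + α₁ * y + β * z) := by
    push_cast; ring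
  rw [hrow, norm_mul ((_ : ℝ) : ℂ), Complex.norm_real, Real.norm_eq_abs, mul_pow, sq_abs]
  linear_combination (1 - ‖ω₂‖ ^ 2) * upperTriangular_two_defect_eq ω₂ α₂ ω₃ y z

theorem forall_upperTriangular_three_le_iff_forall_diagonal {ω₁ ω₂ ω₃ α₁ α₂ β : ℂ} {b : ℝ}
    (hb_def : 1 - ‖ω₂‖ ^ 2 = b) (hb : 0 < b) :
    (∀ x y z : ℂ, ‖ω₁ * x + α₁ * y + β * z‖ ^ 2 + ‖ω₂ * y + α₂ * z‖ ^ 2 + ‖ω₃ * z‖ ^ 2 ≤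
        ‖x‖ ^ 2 + ‖y‖ ^ 2 + ‖z‖ ^ 2) ↔
      ∀ x w z : ℂ, ‖b * ω₁ * x + α₁ * w + (β * b + α₁ * α₂ * starRingEnd ℂ ω₂) * z‖ ^ 2 ≤
        b ^ 2 * ‖x‖ ^ 2 + b * ‖w‖ ^ 2 + b * (b * (1 - ‖ω₃‖ ^ 2) - ‖α₂‖ ^ 2) * ‖z‖ ^ 2 := by
  have hbC : 1 - (‖ω₂‖ : ℂ) ^ 2 = b := by rw [← hb_def]; push_cast; ring
  have hbC0 : (b : ℂ) ≠ 0 := by exact_mod_cast hb.ne'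
  have hdefect := upperTriangular_three_defect_eq ω₁ ω₂ ω₃ α₁ α₂ β
  simp only [hb_def, hbC] at hdefect
  constructor
  · intro h x w z
    set y := (w + starRingEnd ℂ ω₂ * α₂ * z) / b
    have hw : (b : ℂ) * y - starRingEnd ℂ ω₂ * α₂ * z = w := by
      simp only [y]; field_simp; ring
    have hxyz := hdefect x y z
    rw [hw] at hxyz
    nlinarith [mul_nonneg (sq_nonneg b) (sub_nonneg.2 (h x y z))]
  · intro h x y z
    rw [← sub_nonneg, ← mul_nonneg_iff_of_pos_left (pow_pos hb 2), hdefect x y z]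
    linarith [h x (b * y - starRingEnd ℂ ω₂ * α₂ * z) z]

theorem forall_upperTriangular_three_le_iff_of_norm_lt_one {ω₁ ω₂ ω₃ α₁ α₂ β : ℂ}
    (hω₂ : ‖ω₂‖ < 1) :
    (∀ x y z : ℂ, ‖ω₁ * x + α₁ * y + β * z‖ ^ 2 + ‖ω₂ * y + α₂ * z‖ ^ 2 + ‖ω₃ * z‖ ^ 2 ≤
        ‖x‖ ^ 2 + ‖y‖ ^ 2 + ‖z‖ ^ 2) ↔
      ‖α₁‖ ^ 2 ≤ (1 - ‖ω₁‖ ^ 2) * (1 - ‖ω₂‖ ^ 2) ∧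
        ‖α₂‖ ^ 2 ≤ (1 - ‖ω₂‖ ^ 2) * (1 - ‖ω₃‖ ^ 2) ∧
        ‖β * (1 - (‖ω₂‖ : ℂ) ^ 2) + α₁ * α₂ * starRingEnd ℂ ω₂‖ ^ 2 ≤
          ((1 - ‖ω₁‖ ^ 2) * (1 - ‖ω₂‖ ^ 2) - ‖α₁‖ ^ 2) *
            ((1 - ‖ω₂‖ ^ 2) * (1 - ‖ω₃‖ ^ 2) - ‖α₂‖ ^ 2) := by
  obtain ⟨b, hb_def⟩ : ∃ b : ℝ, 1 - ‖ω₂‖ ^ 2 = b := ⟨_, rfl⟩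
  have hb : 0 < b := by nlinarith [norm_nonneg ω₂]
  have hbC : 1 - (‖ω₂‖ : ℂ) ^ 2 = b := by rw [← hb_def]; push_cast; ring
  rw [forall_upperTriangular_three_le_iff_forall_diagonal hb_def hb]
  simp only [hb_def, hbC]
  generalize β * b + α₁ * α₂ * starRingEnd ℂ ω₂ = E
  generalize hD : b * (1 - ‖ω₃‖ ^ 2) - ‖α₂‖ ^ 2 = D
  have hvec : (∀ x w z : ℂ, ‖b * ω₁ * x + α₁ * w + E * z‖ ^ 2 ≤
      b ^ 2 * ‖x‖ ^ 2 + b * ‖w‖ ^ 2 + b * D * ‖z‖ ^ 2) ↔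
      ∀ v : Fin 3 → ℂ, ‖∑ i, ![(b : ℂ) * ω₁, α₁, E] i * v i‖ ^ 2 ≤
        ∑ i, ![b ^ 2, b, b * D] i * ‖v i‖ ^ 2 := by
    simp only [Fin.forall_fin_succ_pi, Fin.forall_fin_zero_pi, Fin.sum_univ_three]
    rfl
  rw [hvec, forall_norm_sum_mul_sq_le_iff]
  simp only [Fin.forall_fin_succ, IsEmpty.forall_iff, Fin.sum_univ_three, Matrix.cons_val_zero,
    Matrix.cons_val_succ, Matrix.cons_val_one, Matrix.cons_val_two, Matrix.head_cons,
    Matrix.tail_cons, pow_pos hb 2 |>.le, hb.le, (pow_pos hb 2).ne', hb.ne',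
    and_true, true_and]
  have hsum : ‖(b : ℂ) * ω₁‖ ^ 2 / b ^ 2 + ‖α₁‖ ^ 2 / b + ‖E‖ ^ 2 / (b * D) ≤ 1 ↔
      ‖E‖ ^ 2 / (b * D) ≤ 1 - ‖ω₁‖ ^ 2 - ‖α₁‖ ^ 2 / b := by
    rw [norm_mul, Complex.norm_real, Real.norm_of_nonneg hb.le, mul_pow,
      mul_div_cancel_left₀ _ (pow_pos hb 2).ne']
    constructor <;> intro <;> linarith
  have hr := nonneg_and_div_le_iff (t := b * D) (e := ‖E‖ ^ 2)
    (r := 1 - ‖ω₁‖ ^ 2 - ‖α₁‖ ^ 2 / b) (sq_nonneg _)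
  simp only [pow_eq_zero_iff two_ne_zero, norm_eq_zero] at hr
  have hA : 0 ≤ 1 - ‖ω₁‖ ^ 2 - ‖α₁‖ ^ 2 / b ↔ ‖α₁‖ ^ 2 ≤ (1 - ‖ω₁‖ ^ 2) * b := by
    rw [sub_nonneg, div_le_iff₀ hb]
  have hD' : 0 ≤ b * D ↔ ‖α₂‖ ^ 2 ≤ b * (1 - ‖ω₃‖ ^ 2) := by
    rw [mul_nonneg_iff_of_pos_left hb, ← hD, sub_nonneg]
  have hprod : (1 - ‖ω₁‖ ^ 2 - ‖α₁‖ ^ 2 / b) * (b * D) =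
      ((1 - ‖ω₁‖ ^ 2) * b - ‖α₁‖ ^ 2) * D := by
    field_simp
  rw [hsum, hr, hA, hD', hprod]

theorem forall_upperTriangular_three_le_iff_of_norm_eq_one {ω₁ ω₂ ω₃ α₁ α₂ β : ℂ}
    (hω₁ : ‖ω₁‖ ≤ 1) (hω₂ : ‖ω₂‖ = 1) (hω₃ : ‖ω₃‖ ≤ 1) :
    (∀ x y z : ℂ, ‖ω₁ * x + α₁ * y + β * z‖ ^ 2 + ‖ω₂ * y + α₂ * z‖ ^ 2 + ‖ω₃ * z‖ ^ 2 ≤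
        ‖x‖ ^ 2 + ‖y‖ ^ 2 + ‖z‖ ^ 2) ↔
      α₁ = 0 ∧ α₂ = 0 ∧ ‖β‖ ^ 2 ≤ (1 - ‖ω₁‖ ^ 2) * (1 - ‖ω₃‖ ^ 2) := by
  constructor
  · intro h
    have h₁ := (forall_upperTriangular_two_le_iff (α := α₁) hω₁ hω₂.le).1 fun x y => by
      simpa using h x y 0
    have h₂ := (forall_upperTriangular_two_le_iff (α := α₂) hω₂.le hω₃).1 fun y z => by
      have hyz := h 0 y z
      simp only [mul_zero, zero_add, norm_zero, ne_eq, OfNat.ofNat_ne_zero, not_false_eq_true,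
        zero_pow] at hyz
      nlinarith [sq_nonneg ‖α₁ * y + β * z‖]
    simp only [hω₂, one_pow, sub_self, mul_zero, zero_mul, sq_nonpos_iff, norm_eq_zero] at h₁ h₂
    refine ⟨h₁, h₂, (forall_upperTriangular_two_le_iff hω₁ hω₃).1 fun x z => ?_⟩
    simpa [h₂] using h x 0 z
  · rintro ⟨rfl, rfl, hβ⟩ x y z
    have hxz := (forall_upperTriangular_two_le_iff hω₁ hω₃).2 hβ x z
    simp only [zero_mul, add_zero, norm_mul, hω₂, one_mul] at hxz ⊢
    linarith

theorem norm_toEuclideanCLM_upperTriangular_le_one_iff (ω₁ ω₂ ω₃ α₁ α₂ β : ℂ) :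
    ‖Matrix.toEuclideanCLM (𝕜 := ℂ) !![ω₁, α₁, β; 0, ω₂, α₂; 0, 0, ω₃]‖ ≤ 1 ↔
      ∀ x y z : ℂ, ‖ω₁ * x + α₁ * y + β * z‖ ^ 2 + ‖ω₂ * y + α₂ * z‖ ^ 2 + ‖ω₃ * z‖ ^ 2 ≤
        ‖x‖ ^ 2 + ‖y‖ ^ 2 + ‖z‖ ^ 2 := by
  rw [ContinuousLinearMap.opNorm_le_iff zero_le_one]
  simp only [one_mul, ← sq_le_sq₀ (norm_nonneg _) (norm_nonneg _), EuclideanSpace.norm_sq_eq]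
  constructor
  · intro h x y z
    simpa [Matrix.mulVec, dotProduct, Fin.sum_univ_three, add_assoc, mul_comm] using
      h !₂[x, y, z]
  · intro h v
    simpa [Matrix.mulVec, dotProduct, Fin.sum_univ_three, add_assoc, mul_comm] using
      h (v 0) (v 1) (v 2)

/-- **Contractivity criterion for 3×3 upper-triangular matrices** acting on Euclidean `ℂ³`. -/
theorem contraction_criterion_three_by_three (ω₁ ω₂ ω₃ α₁ α₂ β : ℂ)
    (hω₁ : ‖ω₁‖ ≤ 1) (hω₂ : ‖ω₂‖ ≤ 1) (hω₃ : ‖ω₃‖ ≤ 1) :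
    ‖Matrix.toEuclideanCLM (𝕜 := ℂ) !![ω₁, α₁, β; 0, ω₂, α₂; 0, 0, ω₃]‖ ≤ 1 ↔
      ((‖ω₂‖ < 1 ∧
        ‖α₁‖ ^ 2 ≤ (1 - ‖ω₁‖ ^ 2) * (1 - ‖ω₂‖ ^ 2) ∧
        ‖α₂‖ ^ 2 ≤ (1 - ‖ω₂‖ ^ 2) * (1 - ‖ω₃‖ ^ 2) ∧
        ‖β * (1 - (‖ω₂‖ : ℂ) ^ 2) + α₁ * α₂ * (starRingEnd ℂ) ω₂‖ ^ 2 ≤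
          ((1 - ‖ω₁‖ ^ 2) * (1 - ‖ω₂‖ ^ 2) - ‖α₁‖ ^ 2) *
            ((1 - ‖ω₂‖ ^ 2) * (1 - ‖ω₃‖ ^ 2) - ‖α₂‖ ^ 2)) ∨
      (‖ω₂‖ = 1 ∧ α₁ = 0 ∧ α₂ = 0 ∧
        ‖β‖ ^ 2 ≤ (1 - ‖ω₁‖ ^ 2) * (1 - ‖ω₃‖ ^ 2))) := by
  rw [norm_toEuclideanCLM_upperTriangular_le_one_iff]
  rcases hω₂.lt_or_eq with hlt | heq
  · rw [forall_upperTriangular_three_le_iff_of_norm_lt_one hlt]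
    simp only [hlt, hlt.ne, true_and, false_and, or_false]
  · rw [forall_upperTriangular_three_le_iff_of_norm_eq_one hω₁ heq hω₃]
    simp only [heq, lt_irrefl, false_and, false_or, true_and]
end

section
/- (Beardon–Minda three-point Schwarz–Pick lemma.) Let f : ℂ → ℂ be holomorphic on the open unit disk 𝔻 with f(𝔻) ⊆ 𝔻, and let ω₁, ω₂, ω₃ ∈ 𝔻 be pairwise distinct. Then |f*(ω₁,ω₂) − f*(ω₃,ω₂)| · |1 − conj(ω₃)·ω₁| ≤ |ω₁ − ω₃| · |1 − conj(f*(ω₃,ω₂))·f*(ω₁,ω₂)|. -/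
/-!
For fixed `ω₂`, `z ↦ f*(z, ω₂)` is the quotient `φ_{f ω₂} ∘ f / φ_{ω₂}`, where
`φ_a z = (z - a) / (1 - conj a * z)` is the disk automorphism sending `a` to `0`. By the
Schwarz–Pick lemma it has modulus at most `1`, and since the numerator vanishes at `ω₂` it extends
holomorphically across `ω₂`. By the maximum modulus principle the extension `g` is either constant
or maps the disk into itself, and then the Schwarz–Pick lemma for `g` at `ω₁, ω₃` is the claim.
-/

/-- The hyperbolic divided difference
`f*(z,w) = ((f z - f w)/(1 - conj (f w) * f z)) * ((1 - conj w * z)/(z - w))`. -/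
noncomputable def hypDivDiff (f : ℂ → ℂ) (z w : ℂ) : ℂ :=
  ((f z - f w) / (1 - (starRingEnd ℂ) (f w) * f z)) * ((1 - (starRingEnd ℂ) w * z) / (z - w))

open Complex Metric Set
open scoped ComplexConjugate

noncomputable def diskMobius (a z : ℂ) : ℂ := (z - a) / (1 - conj a * z)

lemma one_sub_conj_mul_ne_zero {a z : ℂ} (ha : ‖a‖ < 1) (hz : ‖z‖ ≤ 1) :
    1 - conj a * z ≠ 0 := by
  have : ‖conj a * z‖ < 1 := by
    rw [norm_mul, norm_conj]
    nlinarith [norm_nonneg a, norm_nonneg z]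
  intro h
  rw [← eq_of_sub_eq_zero h, norm_one] at this
  exact lt_irrefl 1 this

lemma normSq_one_sub_conj_mul (a z : ℂ) :
    normSq (1 - conj a * z) = normSq (z - a) + (1 - normSq a) * (1 - normSq z) := by
  simp only [normSq_apply, sub_re, sub_im, mul_re, mul_im, one_re, one_im, conj_re, conj_im]
  ring

lemma norm_diskMobius_lt_one {a z : ℂ} (ha : ‖a‖ < 1) (hz : ‖z‖ < 1) :
    ‖diskMobius a z‖ < 1 := by
  rw [diskMobius, norm_div, div_lt_one (norm_pos_iff.mpr (one_sub_conj_mul_ne_zero ha hz.le)),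
    norm_def, norm_def, normSq_one_sub_conj_mul]
  have hna : normSq a < 1 := by rw [normSq_eq_norm_sq]; nlinarith [norm_nonneg a]
  have hnz : normSq z < 1 := by rw [normSq_eq_norm_sq]; nlinarith [norm_nonneg z]
  exact Real.sqrt_lt_sqrt (normSq_nonneg _) (by nlinarith)

lemma mapsTo_diskMobius {a : ℂ} (ha : ‖a‖ < 1) :
    MapsTo (diskMobius a) (ball 0 1) (ball 0 1) := fun z hz => by
  rw [mem_ball_zero_iff] at hz ⊢
  exact norm_diskMobius_lt_one ha hz

lemma differentiableOn_diskMobius {a : ℂ} (ha : ‖a‖ < 1) :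
    DifferentiableOn ℂ (diskMobius a) (ball 0 1) :=
  DifferentiableOn.div (by fun_prop) (by fun_prop) fun z hz =>
    one_sub_conj_mul_ne_zero ha (mem_ball_zero_iff.mp hz).le

lemma diskMobius_neg_diskMobius {a z : ℂ} (ha : ‖a‖ < 1) (hz : ‖z‖ < 1) :
    diskMobius (-a) (diskMobius a z) = z := by
  have h₁ := one_sub_conj_mul_ne_zero ha hz.le
  have h₂ : 1 - conj (-a) * diskMobius a z ≠ 0 :=
    one_sub_conj_mul_ne_zero (by rwa [norm_neg]) (norm_diskMobius_lt_one ha hz).le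
  rw [diskMobius, div_eq_iff h₂]
  simp only [diskMobius, map_neg]
  linear_combination div_mul_cancel₀ (z - a) h₁

theorem schwarz_pick {f : ℂ → ℂ} (hf : DifferentiableOn ℂ f (ball 0 1))
    (hmaps : MapsTo f (ball 0 1) (ball 0 1)) {z w : ℂ} (hz : z ∈ ball (0 : ℂ) 1)
    (hw : w ∈ ball (0 : ℂ) 1) :
    ‖diskMobius (f w) (f z)‖ ≤ ‖diskMobius w z‖ := by
  have hw' : ‖-w‖ < 1 := by rwa [norm_neg, ← mem_ball_zero_iff]
  have hfw : ‖f w‖ < 1 := mem_ball_zero_iff.mp (hmaps hw)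
  -- Schwarz's lemma for `φ_{f w} ∘ f ∘ φ_{-w}`, which fixes `0`, at the point `φ_w z`
  have hschwarz := Complex.norm_le_norm_of_mapsTo_ball
    ((differentiableOn_diskMobius hfw).comp (hf.comp (differentiableOn_diskMobius hw')
      (mapsTo_diskMobius hw')) (hmaps.comp (mapsTo_diskMobius hw')))
    (((mapsTo_diskMobius hfw).comp (hmaps.comp (mapsTo_diskMobius hw'))).mono_right
      ball_subset_closedBall)
    (by simp [diskMobius]) (norm_diskMobius_lt_one (mem_ball_zero_iff.mp hw)
      (mem_ball_zero_iff.mp hz))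
  rwa [Function.comp_apply, Function.comp_apply,
    diskMobius_neg_diskMobius (mem_ball_zero_iff.mp hw) (mem_ball_zero_iff.mp hz)] at hschwarz

theorem norm_sub_mul_le_of_mapsTo_ball {g : ℂ → ℂ} (hg : DifferentiableOn ℂ g (ball 0 1))
    (hmaps : MapsTo g (ball 0 1) (ball 0 1)) {z w : ℂ} (hz : z ∈ ball (0 : ℂ) 1)
    (hw : w ∈ ball (0 : ℂ) 1) :
    ‖g z - g w‖ * ‖1 - conj w * z‖ ≤ ‖z - w‖ * ‖1 - conj (g w) * g z‖ := by
  have hpick := schwarz_pick hg hmaps hz hw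
  have hgz := mem_ball_zero_iff.mp (hmaps hz)
  have hgw := mem_ball_zero_iff.mp (hmaps hw)
  rw [mem_ball_zero_iff] at hz hw
  rwa [diskMobius, diskMobius, norm_div, norm_div,
    div_le_div_iff₀ (norm_pos_iff.mpr (one_sub_conj_mul_ne_zero hgw hgz.le))
      (norm_pos_iff.mpr (one_sub_conj_mul_ne_zero hw hz.le))] at hpick

theorem norm_sub_mul_le_of_mapsTo_closedBall {g : ℂ → ℂ} (hg : DifferentiableOn ℂ g (ball 0 1))
    (hmaps : MapsTo g (ball 0 1) (closedBall 0 1)) {z w : ℂ} (hz : z ∈ ball (0 : ℂ) 1)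
    (hw : w ∈ ball (0 : ℂ) 1) :
    ‖g z - g w‖ * ‖1 - conj w * z‖ ≤ ‖z - w‖ * ‖1 - conj (g w) * g z‖ := by
  by_cases hopen : MapsTo g (ball 0 1) (ball 0 1)
  · exact norm_sub_mul_le_of_mapsTo_ball hg hopen hz hw
  -- otherwise `‖g‖` attains its maximum `1` inside the disk, so `g` is constant
  obtain ⟨c, hc, hgc⟩ := not_forall₂.mp hopen
  have hgc_eq : ‖g c‖ = 1 := le_antisymm (mem_closedBall_zero_iff.mp (hmaps hc))
    (not_lt.mp (mt mem_ball_zero_iff.mpr hgc))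
  have hmax : IsMaxOn (norm ∘ g) (ball 0 1) c := fun x hx => by
    simpa [hgc_eq] using mem_closedBall_zero_iff.mp (hmaps hx)
  have hconst := Complex.eqOn_of_isPreconnected_of_isMaxOn_norm
    (convex_ball 0 1).isPreconnected isOpen_ball hg hc hmax
  rw [hconst hz, hconst hw, Function.const_apply, Function.const_apply, sub_self, norm_zero,
    zero_mul]
  positivity

section DivDiffExtension

variable {f : ℂ → ℂ} {w z : ℂ}

lemma hypDivDiff_eq_div :
    hypDivDiff f z w = diskMobius (f w) (f z) / diskMobius w z := by
  rw [hypDivDiff, diskMobius, diskMobius, div_div_eq_mul_div, mul_div_assoc]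

lemma norm_hypDivDiff_le_one (hf : DifferentiableOn ℂ f (ball 0 1))
    (hmaps : MapsTo f (ball 0 1) (ball 0 1)) (hz : z ∈ ball (0 : ℂ) 1)
    (hw : w ∈ ball (0 : ℂ) 1) : ‖hypDivDiff f z w‖ ≤ 1 := by
  rw [hypDivDiff_eq_div, norm_div]
  exact div_le_one_of_le₀ (schwarz_pick hf hmaps hz hw) (norm_nonneg _)

/-- The holomorphic extension of `z ↦ hypDivDiff f z w` across `z = w`. -/
noncomputable def hypDivDiffExt (f : ℂ → ℂ) (w z : ℂ) : ℂ :=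
  dslope (fun ζ => diskMobius (f w) (f ζ)) w z * (1 - conj w * z)

lemma hypDivDiffExt_of_ne (h : z ≠ w) : hypDivDiffExt f w z = hypDivDiff f z w := by
  rw [hypDivDiffExt, dslope_of_ne _ h, slope_def_field, hypDivDiff_eq_div]
  simp only [diskMobius, sub_self, zero_div, sub_zero, div_div_eq_mul_div]
  ring

lemma differentiableOn_hypDivDiffExt (hf : DifferentiableOn ℂ f (ball 0 1))
    (hmaps : MapsTo f (ball 0 1) (ball 0 1)) (hw : w ∈ ball (0 : ℂ) 1) :
    DifferentiableOn ℂ (hypDivDiffExt f w) (ball 0 1) := by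
  have hfw := mem_ball_zero_iff.mp (hmaps hw)
  refine DifferentiableOn.mul ?_ (by fun_prop)
  exact (Complex.differentiableOn_dslope (isOpen_ball.mem_nhds hw)).mpr
    ((differentiableOn_diskMobius hfw).comp hf hmaps)

lemma mapsTo_hypDivDiffExt (hf : DifferentiableOn ℂ f (ball 0 1))
    (hmaps : MapsTo f (ball 0 1) (ball 0 1)) (hw : w ∈ ball (0 : ℂ) 1) :
    MapsTo (hypDivDiffExt f w) (ball 0 1) (closedBall 0 1) := by
  have hbound : ∀ z ∈ ball (0 : ℂ) 1, z ≠ w → ‖hypDivDiffExt f w z‖ ≤ 1 := fun z hz hne => by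
    rw [hypDivDiffExt_of_ne hne]
    exact norm_hypDivDiff_le_one hf hmaps hz hw
  intro z hz
  rw [mem_closedBall_zero_iff]
  rcases ne_or_eq z w with hne | rfl
  · exact hbound z hz hne
  -- at the removable point, pass to the limit from the punctured neighbourhood
  have hcont : ContinuousAt (hypDivDiffExt f z) z :=
    ((differentiableOn_hypDivDiffExt hf hmaps hz).differentiableAt
      (isOpen_ball.mem_nhds hz)).continuousAt
  refine le_of_tendsto (hcont.norm.tendsto.mono_left (nhdsWithin_le_nhds (s := {z}ᶜ))) ?_
  filter_upwards [nhdsWithin_le_nhds (isOpen_ball.mem_nhds hz), self_mem_nhdsWithin]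
    with x hx hne using hbound x hx hne

end DivDiffExtension

theorem beardon_minda_general (f : ℂ → ℂ)
    (hf : DifferentiableOn ℂ f {z : ℂ | ‖z‖ < 1})
    (hmap : ∀ z : ℂ, ‖z‖ < 1 → ‖f z‖ < 1)
    (ω₁ ω₂ ω₃ : ℂ)
    (h₁ : ‖ω₁‖ < 1) (h₂ : ‖ω₂‖ < 1) (h₃ : ‖ω₃‖ < 1)
    (h₁₂ : ω₁ ≠ ω₂) (h₂₃ : ω₂ ≠ ω₃) :
    ‖hypDivDiff f ω₁ ω₂ - hypDivDiff f ω₃ ω₂‖ *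
        ‖1 - (starRingEnd ℂ) ω₃ * ω₁‖ ≤
      ‖ω₁ - ω₃‖ *
        ‖1 - (starRingEnd ℂ) (hypDivDiff f ω₃ ω₂) * hypDivDiff f ω₁ ω₂‖ := by
  rw [← ball_zero_eq] at hf
  have hmaps : MapsTo f (ball 0 1) (ball 0 1) := fun z hz =>
    mem_ball_zero_iff.mpr (hmap z (mem_ball_zero_iff.mp hz))
  have h₂' : ω₂ ∈ ball (0 : ℂ) 1 := mem_ball_zero_iff.mpr h₂
  have key := norm_sub_mul_le_of_mapsTo_closedBall (differentiableOn_hypDivDiffExt hf hmaps h₂')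
    (mapsTo_hypDivDiffExt hf hmaps h₂') (mem_ball_zero_iff.mpr h₁) (mem_ball_zero_iff.mpr h₃)
  rwa [hypDivDiffExt_of_ne h₁₂, hypDivDiffExt_of_ne h₂₃.symm] at key

/-- **The Beardon–Minda three-point Schwarz–Pick lemma.** -/
theorem beardon_minda (f : ℂ → ℂ)
    (hf : DifferentiableOn ℂ f {z : ℂ | ‖z‖ < 1})
    (hmap : ∀ z : ℂ, ‖z‖ < 1 → ‖f z‖ < 1)
    (ω₁ ω₂ ω₃ : ℂ)
    (h₁ : ‖ω₁‖ < 1) (h₂ : ‖ω₂‖ < 1) (h₃ : ‖ω₃‖ < 1)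
    (h₁₂ : ω₁ ≠ ω₂) (h₁₃ : ω₁ ≠ ω₃) (h₂₃ : ω₂ ≠ ω₃) :
    ‖hypDivDiff f ω₁ ω₂ - hypDivDiff f ω₃ ω₂‖ *
        ‖1 - (starRingEnd ℂ) ω₃ * ω₁‖ ≤
      ‖ω₁ - ω₃‖ *
        ‖1 - (starRingEnd ℂ) (hypDivDiff f ω₃ ω₂) * hypDivDiff f ω₁ ω₂‖ :=
  beardon_minda_general f hf hmap ω₁ ω₂ ω₃ h₁ h₂ h₃ h₁₂ h₂₃
end

section
/- (Second-order Schwarz–Pick inequality on a distinguished variety.) Let ω = (ω₁,ω₂) ∈ 𝔻². Then there exists a distinguished variety V ∩ 𝔻² (with V = Z(q) the zero set of a polynomial q ∈ ℂ[z,w]) such that for every function f : ℂ² → ℂ that is continuous on the closed bidisk, holomorphic on 𝔻², and satisfies |f(z)| ≤ 1 for all z ∈ V ∩ 𝔻², the following holds: setting αⱼ = 1 − |ωⱼ|² and βⱼ = −conj(ωⱼ)·(1 − |ωⱼ|²) for j = 1,2, γ₁ = α₁·∂f/∂z₁(ω) + α₂·∂f/∂z₂(ω), and γ₂ = (1/2)·Σ_{j,k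 ∈ {1,2}} αⱼ·αₖ·∂²f/∂zⱼ∂zₖ(ω) + β₁·∂f/∂z₁(ω) + β₂·∂f/∂z₂(ω), one has |γ₂·(1 − |f(ω)|²) + γ₁²·conj(f(ω))| ≤ (1 − |f(ω)|²)² − |γ₁|². -/
/-!
Let `mobius a z = (z + a) / (1 + conj a * z)` be the disc automorphism sending `0` to `a`. The
holomorphic disc `curve ω z = (mobius ω.1 z, mobius ω.2 z)` passes through `ω` at `z = 0` and is the
part in `𝔻²` of the zero set of a polynomial of bidegree `(1, 1)`, the graph of a disc automorphism;
on that zero set `|z| = 1 ↔ |w| = 1`, so it is a distinguished variety.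

Restricting `f` to the curve gives a holomorphic `g : 𝔻 → closedBall 0 1` with `g 0 = f ω`,
`g' 0 = γ₁` and `g'' 0 = 2 γ₂` (second-order chain rule; `f` is twice differentiable by the Cauchy
integral formula on a polydisc). So it suffices to prove the one-variable inequality. Write
`g z = mobius a (z * k z)` with `a = g 0`, where `|k| ≤ 1` by the Schwarz lemma. Then the left side
is `(1 - |a|²)² |k' 0|` and the right side is `(1 - |a|²)² (1 - |k 0|²)`, and the claim is the
first-order Schwarz–Pick inequality for `k`.
-/

/-- The open bidisk `𝔻² ⊆ ℂ²`. -/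
def openBidisk : Set (ℂ × ℂ) := {z | ‖z.1‖ < 1 ∧ ‖z.2‖ < 1}

/-- The closed bidisk. -/
def closedBidisk : Set (ℂ × ℂ) := {z | ‖z.1‖ ≤ 1 ∧ ‖z.2‖ ≤ 1}

/-- The torus `𝕋²`, the distinguished boundary of the bidisk. -/
def torus : Set (ℂ × ℂ) := {z | ‖z.1‖ = 1 ∧ ‖z.2‖ = 1}

/-- The zero set in `ℂ²` of a polynomial in two variables. -/
def zeroSet (q : MvPolynomial (Fin 2) ℂ) : Set (ℂ × ℂ) :=
  {z | MvPolynomial.eval ![z.1, z.2] q = 0}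

/-- The standard basis vectors of `ℂ × ℂ`. -/
def e : Fin 2 → ℂ × ℂ := ![(1, 0), (0, 1)]

open ComplexConjugate Metric Set Filter Function
open scoped Topology

noncomputable section

def mobius (a z : ℂ) : ℂ := (z + a) / (1 + conj a * z)

section Mobius

variable {a z : ℂ}

theorem norm_one_add_conj_mul_sq_sub_norm_add_sq (a z : ℂ) :
    ‖1 + conj a * z‖ ^ 2 - ‖z + a‖ ^ 2 = (1 - ‖a‖ ^ 2) * (1 - ‖z‖ ^ 2) := by
  apply Complex.ofReal_injective
  push_cast
  simp only [← Complex.mul_conj', map_add, map_mul, map_one, Complex.conj_conj]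
  ring

theorem one_add_conj_mul_ne_zero (ha : ‖a‖ < 1) (hz : ‖z‖ ≤ 1) : 1 + conj a * z ≠ 0 := by
  intro h
  have : ‖conj a * z‖ = 1 := by rw [eq_neg_of_add_eq_zero_right h, norm_neg, norm_one]
  rw [norm_mul, Complex.norm_conj] at this
  nlinarith [norm_nonneg a, norm_nonneg z]

theorem mobius_zero (a : ℂ) : mobius a 0 = a := by simp [mobius]

theorem norm_mobius_lt_one (ha : ‖a‖ < 1) (hz : ‖z‖ < 1) : ‖mobius a z‖ < 1 := by
  have hden := one_add_conj_mul_ne_zero ha hz.le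
  rw [mobius, norm_div, div_lt_one (norm_pos_iff.mpr hden), ← sq_lt_sq₀ (norm_nonneg _)
    (norm_nonneg _), ← sub_pos, norm_one_add_conj_mul_sq_sub_norm_add_sq]
  have : 0 < 1 - ‖a‖ ^ 2 := by nlinarith [norm_nonneg a]
  have : 0 < 1 - ‖z‖ ^ 2 := by nlinarith [norm_nonneg z]
  positivity

theorem mobius_mobius_neg (ha : ‖a‖ < 1) (hz : ‖z‖ < 1) : mobius a (mobius (-a) z) = z := by
  have h₁ : 1 + conj (-a) * z ≠ 0 := one_add_conj_mul_ne_zero (by rwa [norm_neg]) hz.le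
  have h₂ : (1 : ℂ) - conj a * a ≠ 0 := by
    rw [Complex.conj_mul', ← Complex.ofReal_pow, ← Complex.ofReal_one, ← Complex.ofReal_sub,
      Complex.ofReal_ne_zero]
    nlinarith [norm_nonneg a]
  simp only [mobius, map_neg, neg_mul, ← sub_eq_add_neg] at h₁ ⊢
  rw [div_add' _ _ _ h₁, mul_div_assoc', one_add_div h₁, div_div_div_cancel_right₀ h₁, div_eq_iff]
  · ring
  · contrapose! h₂
    linear_combination h₂

theorem hasDerivAt_mobius (h : 1 + conj a * z ≠ 0) :
    HasDerivAt (mobius a) ((1 - conj a * a) / (1 + conj a * z) ^ 2) z := by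
  have := ((hasDerivAt_id' z).add_const a).div
    (((hasDerivAt_id' z).const_mul (conj a)).const_add 1) h
  exact this.congr_deriv (by ring)

theorem deriv_mobius_eventuallyEq (ha : ‖a‖ < 1) :
    deriv (mobius a) =ᶠ[𝓝 0] fun z ↦ (1 - ↑‖a‖ ^ 2) / (1 + conj a * z) ^ 2 := by
  filter_upwards [ball_mem_nhds (0 : ℂ) one_pos] with z hz
  rw [(hasDerivAt_mobius (one_add_conj_mul_ne_zero ha (mem_ball_zero_iff.mp hz).le)).deriv,
    Complex.conj_mul']

theorem differentiableAt_mobius (ha : ‖a‖ < 1) (hz : ‖z‖ ≤ 1) : DifferentiableAt ℂ (mobius a) z :=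
  (hasDerivAt_mobius (one_add_conj_mul_ne_zero ha hz)).differentiableAt

theorem deriv_mobius_zero (ha : ‖a‖ < 1) : deriv (mobius a) 0 = 1 - ‖a‖ ^ 2 := by
  simp [(deriv_mobius_eventuallyEq ha).eq_of_nhds]

theorem hasDerivAt_deriv_mobius_zero (ha : ‖a‖ < 1) :
    HasDerivAt (deriv (mobius a)) (-2 * conj a * (1 - ‖a‖ ^ 2)) 0 := by
  have hden : HasDerivAt (fun z ↦ (1 + conj a * z) ^ 2) (2 * conj a) 0 := by
    refine ((((hasDerivAt_id' (0 : ℂ)).const_mul (conj a)).const_add 1).pow 2).congr_deriv ?_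
    norm_num
  have := (hasDerivAt_const (0 : ℂ) (1 - (‖a‖ : ℂ) ^ 2)).div hden (by simp)
  refine (this.congr_of_eventuallyEq (deriv_mobius_eventuallyEq ha)).congr_deriv ?_
  simp only [mul_zero, add_zero, one_pow]
  ring

end Mobius

section SecondDerivative

variable {𝕜 : Type*} [NontriviallyNormedField 𝕜] {t : 𝕜}

theorem deriv_deriv_comp {F G : 𝕜 → 𝕜} (hF : ∀ᶠ y in 𝓝 (G t), DifferentiableAt 𝕜 F y)
    (hF' : DifferentiableAt 𝕜 (deriv F) (G t)) (hG : ∀ᶠ s in 𝓝 t, DifferentiableAt 𝕜 G s)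
    (hG' : DifferentiableAt 𝕜 (deriv G) t) :
    deriv (deriv (F ∘ G)) t =
      deriv (deriv F) (G t) * deriv G t ^ 2 + deriv F (G t) * deriv (deriv G) t := by
  have hderiv : deriv (F ∘ G) =ᶠ[𝓝 t] fun s ↦ deriv F (G s) * deriv G s := by
    filter_upwards [hG, hG.self_of_nhds.continuousAt.eventually hF] with s hGs hFs
    exact deriv_comp s hFs hGs
  rw [hderiv.deriv_eq]
  exact ((hF'.hasDerivAt.comp t hG.self_of_nhds.hasDerivAt).mul hG'.hasDerivAt).deriv.trans
    (by rw [comp_apply]; ring)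

variable {E F : Type*} [NormedAddCommGroup E] [NormedSpace 𝕜 E] [NormedAddCommGroup F]
  [NormedSpace 𝕜 F]

theorem deriv_deriv_comp_of_fderiv {f : E → F} {Φ : 𝕜 → E}
    (hf : ∀ᶠ y in 𝓝 (Φ t), DifferentiableAt 𝕜 f y) (hf' : DifferentiableAt 𝕜 (fderiv 𝕜 f) (Φ t))
    (hΦ : ∀ᶠ s in 𝓝 t, DifferentiableAt 𝕜 Φ s) (hΦ' : DifferentiableAt 𝕜 (deriv Φ) t) :
    deriv (deriv (f ∘ Φ)) t =
      fderiv 𝕜 (fderiv 𝕜 f) (Φ t) (deriv Φ t) (deriv Φ t) +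
        fderiv 𝕜 f (Φ t) (deriv (deriv Φ) t) := by
  have hderiv : deriv (f ∘ Φ) =ᶠ[𝓝 t] fun s ↦ fderiv 𝕜 f (Φ s) (deriv Φ s) := by
    filter_upwards [hΦ, hΦ.self_of_nhds.continuousAt.eventually hf] with s hΦs hfs
    exact fderiv_comp_deriv s hfs hΦs
  rw [hderiv.deriv_eq]
  exact ((hf'.hasFDerivAt.comp_hasDerivAt t hΦ.self_of_nhds.hasDerivAt).clm_apply
    hΦ'.hasDerivAt).deriv

theorem hasDerivAt_deriv_id_mul_zero {k : 𝕜 → 𝕜} (hk : ∀ᶠ z in 𝓝 0, DifferentiableAt 𝕜 k z)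
    (hk' : DifferentiableAt 𝕜 (deriv k) 0) :
    HasDerivAt (deriv fun z ↦ z * k z) (2 * deriv k 0) 0 := by
  have hderiv : deriv (fun z ↦ z * k z) =ᶠ[𝓝 0] fun z ↦ k z + z * deriv k z := by
    filter_upwards [hk] with z hz
    exact ((hasDerivAt_id' z).mul hz.hasDerivAt).deriv.trans (by ring)
  exact ((hk.self_of_nhds.hasDerivAt.add ((hasDerivAt_id' 0).mul hk'.hasDerivAt))
    |>.congr_of_eventuallyEq hderiv).congr_deriv (by ring)

end SecondDerivative

section SchwarzPick

variable {u k : ℂ → ℂ} {a : ℂ}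

theorem norm_one_sub_norm_sq (ha : ‖a‖ ≤ 1) : ‖(1 - (‖a‖ : ℂ) ^ 2)‖ = 1 - ‖a‖ ^ 2 := by
  rw [← Complex.ofReal_pow, ← Complex.ofReal_one, ← Complex.ofReal_sub, Complex.norm_real,
    Real.norm_of_nonneg (by nlinarith [norm_nonneg a])]

theorem mapsTo_ball_or_eqOn_const (hd : DifferentiableOn ℂ u (ball 0 1))
    (hu : MapsTo u (ball 0 1) (closedBall 0 1)) :
    MapsTo u (ball 0 1) (ball 0 1) ∨ EqOn u (const ℂ (u 0)) (ball 0 1) := by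
  by_cases h : ∃ z₀ ∈ ball (0 : ℂ) 1, ‖u z₀‖ = 1
  · obtain ⟨z₀, hz₀, hnorm⟩ := h
    have hmax : IsMaxOn (norm ∘ u) (ball 0 1) z₀ := fun z hz ↦ by
      simpa [hnorm] using hu hz
    have heq := Complex.eqOn_of_isPreconnected_of_isMaxOn_norm
      (convex_ball (0 : ℂ) 1).isPreconnected isOpen_ball hd hz₀ hmax
    right
    intro z hz
    rw [heq hz, heq (mem_ball_self one_pos)]
    rfl
  · push Not at h
    left
    intro z hz
    exact mem_ball_zero_iff.mpr ((mem_closedBall_zero_iff.mp (hu hz)).lt_of_ne (h z hz))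

theorem deriv_and_deriv_deriv_eq_zero_of_eqOn_const {c : ℂ}
    (h : EqOn u (const ℂ c) (ball 0 1)) : deriv u 0 = 0 ∧ deriv (deriv u) 0 = 0 := by
  have hderiv : deriv u =ᶠ[𝓝 0] fun _ ↦ 0 := by
    filter_upwards [(eventuallyEq_of_mem (ball_mem_nhds 0 one_pos) h).deriv] with z hz
    exact hz.trans (deriv_const z c)
  exact ⟨hderiv.eq_of_nhds, hderiv.deriv_eq.trans (deriv_const 0 0)⟩

/-- `k` is the slope at `0` of `mobius (-u 0) ∘ u`, which vanishes at `0`; `‖k‖ ≤ 1` is the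
Schwarz lemma. -/
theorem exists_eqOn_mobius_id_mul (hd : DifferentiableOn ℂ u (ball 0 1))
    (hu : MapsTo u (ball 0 1) (ball 0 1)) :
    ∃ k : ℂ → ℂ, DifferentiableOn ℂ k (ball 0 1) ∧ MapsTo k (ball 0 1) (closedBall 0 1) ∧
      EqOn u (mobius (u 0) ∘ fun z ↦ z * k z) (ball 0 1) := by
  have ha : ‖u 0‖ < 1 := mem_ball_zero_iff.mp (hu (mem_ball_self one_pos))
  have ha' : ‖-u 0‖ < 1 := by rwa [norm_neg]
  set h := mobius (-u 0) ∘ u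
  have hhd : DifferentiableOn ℂ h (ball 0 1) := fun z hz ↦
    (differentiableAt_mobius ha' (mem_ball_zero_iff.mp (hu hz)).le).comp_differentiableWithinAt z
      (hd z hz)
  have hh0 : h 0 = 0 := by simp [h, mobius]
  have hhmaps : MapsTo h (ball 0 1) (closedBall (h 0) 1) := fun z hz ↦ by
    rw [hh0, mem_closedBall_zero_iff]
    exact (norm_mobius_lt_one ha' (mem_ball_zero_iff.mp (hu hz))).le
  refine ⟨dslope h 0, (Complex.differentiableOn_dslope (ball_mem_nhds 0 one_pos)).mpr hhd,
    fun z hz ↦ ?_, fun z hz ↦ ?_⟩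
  · simpa using Complex.norm_dslope_le_div_of_mapsTo_ball hhd hhmaps hz
  · have hh_eq := sub_smul_dslope h 0 z
    rw [sub_zero, hh0, sub_zero, smul_eq_mul] at hh_eq
    rw [comp_apply, hh_eq]
    exact (mobius_mobius_neg ha (mem_ball_zero_iff.mp (hu hz))).symm

theorem deriv_mobius_comp_id_mul_zero (ha : ‖a‖ < 1) (hk : DifferentiableOn ℂ k (ball 0 1)) :
    deriv (mobius a ∘ fun z ↦ z * k z) 0 = (1 - ‖a‖ ^ 2) * k 0 ∧
      deriv (deriv (mobius a ∘ fun z ↦ z * k z)) 0 =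
        2 * (1 - ‖a‖ ^ 2) * (deriv k 0 - conj a * k 0 ^ 2) := by
  have hk_ev : ∀ᶠ z in 𝓝 0, DifferentiableAt ℂ k z := eventually_of_mem (ball_mem_nhds 0 one_pos)
    fun z hz ↦ hk.differentiableAt (isOpen_ball.mem_nhds hz)
  have hk' : DifferentiableAt ℂ (deriv k) 0 :=
    (hk.analyticAt (ball_mem_nhds 0 one_pos)).deriv.differentiableAt
  have hG' := hasDerivAt_deriv_id_mul_zero hk_ev hk'
  set G : ℂ → ℂ := fun z ↦ z * k z
  have hG : HasDerivAt G (k 0) 0 :=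
    ((hasDerivAt_id' 0).mul hk_ev.self_of_nhds.hasDerivAt).congr_deriv (by ring)
  have hG0 : G 0 = 0 := zero_mul _
  have hF_ev : ∀ᶠ y in 𝓝 (G 0), DifferentiableAt ℂ (mobius a) y := by
    rw [hG0]
    exact eventually_of_mem (ball_mem_nhds 0 one_pos) fun y hy ↦
      differentiableAt_mobius ha (mem_ball_zero_iff.mp hy).le
  have hF' : DifferentiableAt ℂ (deriv (mobius a)) (G 0) := by
    rw [hG0]
    exact (hasDerivAt_deriv_mobius_zero ha).differentiableAt
  constructor
  · rw [deriv_comp 0 hF_ev.self_of_nhds hG.differentiableAt, hG.deriv, hG0, deriv_mobius_zero ha]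
  · rw [deriv_deriv_comp hF_ev hF' (hk_ev.mono fun z hz ↦ differentiableAt_id.mul hz)
        hG'.differentiableAt, hG.deriv, hG'.deriv, hG0, (hasDerivAt_deriv_mobius_zero ha).deriv,
      deriv_mobius_zero ha]
    ring

theorem norm_deriv_le_one_sub_norm_sq (hd : DifferentiableOn ℂ u (ball 0 1))
    (hu : MapsTo u (ball 0 1) (closedBall 0 1)) : ‖deriv u 0‖ ≤ 1 - ‖u 0‖ ^ 2 := by
  have hu0 : ‖u 0‖ ≤ 1 := mem_closedBall_zero_iff.mp (hu (mem_ball_self one_pos))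
  rcases mapsTo_ball_or_eqOn_const hd hu with hball | hconst
  · obtain ⟨k, hkd, hk, hu_eq⟩ := exists_eqOn_mobius_id_mul hd hball
    have hk0 : ‖k 0‖ ≤ 1 := mem_closedBall_zero_iff.mp (hk (mem_ball_self one_pos))
    have hev := eventuallyEq_of_mem (ball_mem_nhds 0 one_pos) hu_eq
    rw [hev.deriv_eq, (deriv_mobius_comp_id_mul_zero (hu0.lt_of_ne ?_) hkd).1, norm_mul,
      norm_one_sub_norm_sq hu0]
    · exact mul_le_of_le_one_right (by nlinarith [norm_nonneg (u 0)]) hk0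
    · exact (mem_ball_zero_iff.mp (hball (mem_ball_self one_pos))).ne
  · rw [(deriv_and_deriv_deriv_eq_zero_of_eqOn_const hconst).1, norm_zero]
    nlinarith [norm_nonneg (u 0)]

theorem norm_second_order_schwarz_pick_le (hd : DifferentiableOn ℂ u (ball 0 1))
    (hu : MapsTo u (ball 0 1) (closedBall 0 1)) :
    ‖deriv (deriv u) 0 / 2 * (1 - (‖u 0‖ : ℂ) ^ 2) + deriv u 0 ^ 2 * conj (u 0)‖ ≤
      (1 - ‖u 0‖ ^ 2) ^ 2 - ‖deriv u 0‖ ^ 2 := by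
  have hu0 : ‖u 0‖ ≤ 1 := mem_closedBall_zero_iff.mp (hu (mem_ball_self one_pos))
  rcases mapsTo_ball_or_eqOn_const hd hu with hball | hconst
  · obtain ⟨k, hkd, hk, hu_eq⟩ := exists_eqOn_mobius_id_mul hd hball
    have hev := eventuallyEq_of_mem (ball_mem_nhds 0 one_pos) hu_eq
    obtain ⟨h₁, h₂⟩ := deriv_mobius_comp_id_mul_zero
      (mem_ball_zero_iff.mp (hball (mem_ball_self one_pos))) hkd
    have hSP := norm_deriv_le_one_sub_norm_sq hkd hk
    rw [hev.deriv.deriv_eq, hev.deriv_eq, h₁, h₂]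
    have hfactor : 2 * (1 - (‖u 0‖ : ℂ) ^ 2) * (deriv k 0 - conj (u 0) * k 0 ^ 2) / 2 *
          (1 - (‖u 0‖ : ℂ) ^ 2) + ((1 - (‖u 0‖ : ℂ) ^ 2) * k 0) ^ 2 * conj (u 0) =
        (1 - (‖u 0‖ : ℂ) ^ 2) ^ 2 * deriv k 0 := by ring
    rw [hfactor, norm_mul, norm_mul, norm_pow, norm_one_sub_norm_sq hu0]
    nlinarith [sq_nonneg (1 - ‖u 0‖ ^ 2)]
  · obtain ⟨h₁, h₂⟩ := deriv_and_deriv_deriv_eq_zero_of_eqOn_const hconst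
    simp only [h₁, h₂, zero_div, zero_mul, ne_eq, OfNat.ofNat_ne_zero, not_false_eq_true,
      zero_pow, add_zero, norm_zero, sub_zero]
    positivity

end SchwarzPick

section CauchyIntegral

open MeasureTheory ContinuousLinearMap
open scoped Real

theorem hasDerivAt_inv_sub_pow {𝕜 : Type*} [NontriviallyNormedField 𝕜] {c z : 𝕜} (h : z ≠ c)
    (m : ℕ) : HasDerivAt (fun w ↦ (c - w)⁻¹ ^ m) (m * (c - z)⁻¹ ^ (m + 1)) z := by
  have hinv : HasDerivAt (fun w ↦ (c - w)⁻¹) ((c - z)⁻¹ ^ 2) z :=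
    (((hasDerivAt_id' z).const_sub c).inv (sub_ne_zero.mpr h.symm)).congr_deriv (by field_simp)
  refine (hinv.pow m).congr_deriv ?_
  rcases m with _ | m
  · simp
  · simp only [Nat.add_sub_cancel]
    ring

def cauchyKernel (m n : ℕ) (z w : ℂ) (x : ℂ × ℂ) : ℂ := (z - x.1)⁻¹ ^ m * (w - x.2)⁻¹ ^ n

variable {z w : ℂ} {p x : ℂ × ℂ} {r R : ℝ}

theorem hasFDerivAt_cauchyKernel (hz : x.1 ≠ z) (hw : x.2 ≠ w) (m n : ℕ) :
    HasFDerivAt (cauchyKernel m n z w)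
      ((m * cauchyKernel (m + 1) n z w x) • fst ℂ ℂ ℂ +
        (n * cauchyKernel m (n + 1) z w x) • snd ℂ ℂ ℂ) x := by
  have h₁ := (hasDerivAt_inv_sub_pow hz m).hasFDerivAt.comp x (hasFDerivAt_fst (p := x))
  have h₂ := (hasDerivAt_inv_sub_pow hw n).hasFDerivAt.comp x (hasFDerivAt_snd (p := x))
  refine (h₁.mul h₂).congr_fderiv (ContinuousLinearMap.ext fun v ↦ ?_)
  simp [cauchyKernel]
  ring

theorem norm_cauchyKernel_le (hr : 0 < r) (hz : r ≤ ‖z - x.1‖) (hw : r ≤ ‖w - x.2‖) (m n : ℕ) :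
    ‖cauchyKernel m n z w x‖ ≤ r⁻¹ ^ (m + n) := by
  rw [cauchyKernel, norm_mul, norm_pow, norm_pow, norm_inv, norm_inv, pow_add]
  gcongr

theorem norm_fderiv_cauchyKernel_le (hr : 0 < r) (hz : r ≤ ‖z - x.1‖) (hw : r ≤ ‖w - x.2‖)
    (m n : ℕ) :
    ‖(m * cauchyKernel (m + 1) n z w x) • fst ℂ ℂ ℂ +
        (n * cauchyKernel m (n + 1) z w x) • snd ℂ ℂ ℂ‖ ≤ (m + n) * r⁻¹ ^ (m + n + 1) := by
  have h₁ := norm_cauchyKernel_le hr hz hw (m + 1) n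
  have h₂ := norm_cauchyKernel_le hr hz hw m (n + 1)
  rw [show m + 1 + n = m + n + 1 by ring] at h₁
  rw [show m + (n + 1) = m + n + 1 by ring] at h₂
  calc _ ≤ ‖(m : ℂ) * cauchyKernel (m + 1) n z w x‖ * ‖fst ℂ ℂ ℂ‖ +
        ‖(n : ℂ) * cauchyKernel m (n + 1) z w x‖ * ‖snd ℂ ℂ ℂ‖ :=
        (norm_add_le _ _).trans (add_le_add (norm_smul_le _ _) (norm_smul_le _ _))
    _ ≤ m * r⁻¹ ^ (m + n + 1) * 1 + n * r⁻¹ ^ (m + n + 1) * 1 := by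
        simp only [norm_mul, Complex.norm_natCast]
        gcongr
        exacts [norm_fst_le ℂ ℂ ℂ, norm_snd_le ℂ ℂ ℂ]
    _ = (m + n) * r⁻¹ ^ (m + n + 1) := by ring

variable {α : Type*} [MeasurableSpace α] {μ : Measure α} {g u v : α → ℂ}

def cauchyPowerIntegral (μ : Measure α) (g u v : α → ℂ) (m n : ℕ) (x : ℂ × ℂ) : ℂ :=
  ∫ a, g a * cauchyKernel m n (u a) (v a) x ∂μ

theorem measurable_cauchyKernel (hu : Measurable u) (hv : Measurable v) (m n : ℕ) (x : ℂ × ℂ) :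
    Measurable fun a ↦ cauchyKernel m n (u a) (v a) x := by
  unfold cauchyKernel
  fun_prop

theorem integrable_mul_cauchyKernel (hg : Integrable g μ) (hu : Measurable u) (hv : Measurable v)
    (hr : 0 < r) (hur : ∀ a, r ≤ ‖u a - x.1‖) (hvr : ∀ a, r ≤ ‖v a - x.2‖) (m n : ℕ) :
    Integrable (fun a ↦ g a * cauchyKernel m n (u a) (v a) x) μ :=
  hg.mul_bdd (measurable_cauchyKernel hu hv m n x).aestronglyMeasurable
    (ae_of_all _ fun a ↦ norm_cauchyKernel_le hr (hur a) (hvr a) m n)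

theorem hasFDerivAt_cauchyPowerIntegral (hg : Integrable g μ) (hu : Measurable u)
    (hv : Measurable v) (huR : ∀ a, R ≤ dist (u a) p.1) (hvR : ∀ a, R ≤ dist (v a) p.2)
    (hx : x ∈ ball p R) (m n : ℕ) :
    HasFDerivAt (cauchyPowerIntegral μ g u v m n)
      ((m * cauchyPowerIntegral μ g u v (m + 1) n x) • fst ℂ ℂ ℂ +
        (n * cauchyPowerIntegral μ g u v m (n + 1) x) • snd ℂ ℂ ℂ) x := by
  obtain ⟨δ, hδ_def⟩ : ∃ δ, δ = (R - dist x p) / 2 := ⟨_, rfl⟩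
  have hδ : 0 < δ := by linarith [mem_ball.mp hx]
  have hfar : ∀ y ∈ ball x δ, ∀ a, δ ≤ ‖u a - y.1‖ ∧ δ ≤ ‖v a - y.2‖ := by
    intro y hy a
    have hy₁ : dist y.1 p.1 ≤ dist y p := by rw [Prod.dist_eq]; exact le_max_left _ _
    have hy₂ : dist y.2 p.2 ≤ dist y p := by rw [Prod.dist_eq]; exact le_max_right _ _
    rw [← dist_eq_norm, ← dist_eq_norm]
    constructor <;> linarith [dist_triangle (u a) y.1 p.1, dist_triangle (v a) y.2 p.2,
      dist_triangle y x p, huR a, hvR a, mem_ball.mp hy]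
  have hint : ∀ y ∈ ball x δ, ∀ k l, Integrable (fun a ↦ g a * cauchyKernel k l (u a) (v a) y) μ :=
    fun y hy ↦ integrable_mul_cauchyKernel hg hu hv hδ (fun a ↦ (hfar y hy a).1)
      (fun a ↦ (hfar y hy a).2)
  have hx₀ : x ∈ ball x δ := mem_ball_self hδ
  have hF := hasFDerivAt_integral_of_dominated_of_fderiv_le (μ := μ)
    (F := fun y a ↦ g a * cauchyKernel m n (u a) (v a) y)
    (F' := fun y a ↦ g a • ((m * cauchyKernel (m + 1) n (u a) (v a) y) • fst ℂ ℂ ℂ +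
      (n * cauchyKernel m (n + 1) (u a) (v a) y) • snd ℂ ℂ ℂ))
    (bound := fun a ↦ ‖g a‖ * ((m + n) * δ⁻¹ ^ (m + n + 1))) (ball_mem_nhds x hδ)
    (eventually_of_mem (ball_mem_nhds x hδ) fun y hy ↦ (hint y hy m n).aestronglyMeasurable)
    (hint x hx₀ m n)
    (hg.aestronglyMeasurable.smul
      ((((measurable_cauchyKernel hu hv _ _ x).const_mul _).smul_const _).add
        (((measurable_cauchyKernel hu hv _ _ x).const_mul _).smul_const _)).aestronglyMeasurable)
    (ae_of_all _ fun a y hy ↦ by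
      rw [norm_smul]
      exact mul_le_mul_of_nonneg_left
        (norm_fderiv_cauchyKernel_le hδ (hfar y hy a).1 (hfar y hy a).2 m n) (norm_nonneg _))
    (hg.norm.mul_const _)
    (ae_of_all _ fun a y hy ↦ by
      have hne₁ : y.1 ≠ u a := fun h ↦ by
        have := (hfar y hy a).1; rw [h, sub_self, norm_zero] at this; linarith
      have hne₂ : y.2 ≠ v a := fun h ↦ by
        have := (hfar y hy a).2; rw [h, sub_self, norm_zero] at this; linarith
      exact (hasFDerivAt_cauchyKernel hne₁ hne₂ m n).const_mul (g a))
  simp only [smul_add, smul_smul, mul_left_comm (g _)] at hF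
  rwa [integral_add (((hint x hx₀ (m + 1) n).const_mul _).smul_const _)
      (((hint x hx₀ m (n + 1)).const_mul _).smul_const _), integral_smul_const, integral_smul_const,
    integral_const_mul, integral_const_mul] at hF

end CauchyIntegral

section Regularity

open MeasureTheory ContinuousLinearMap
open scoped Real

variable {f : ℂ × ℂ → ℂ} {p x : ℂ × ℂ} {R : ℝ}

theorem continuousOn_cauchyKernel (m n : ℕ) (x : ℂ × ℂ) :
    ContinuousOn (fun zw : ℂ × ℂ ↦ cauchyKernel m n zw.1 zw.2 x) {zw | zw.1 ≠ x.1 ∧ zw.2 ≠ x.2} :=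
  (((continuousOn_fst.sub continuousOn_const).inv₀ fun _ h ↦ sub_ne_zero.mpr h.1).pow m).mul
    (((continuousOn_snd.sub continuousOn_const).inv₀ fun _ h ↦ sub_ne_zero.mpr h.2).pow n)

theorem sphere_prod_sphere_subset_closedBall (p : ℂ × ℂ) (R : ℝ) :
    sphere p.1 R ×ˢ sphere p.2 R ⊆ closedBall p R := by
  rw [← closedBall_prod_same]
  exact prod_mono sphere_subset_closedBall sphere_subset_closedBall

theorem circleIntegral_circleIntegral_eq_setIntegral {E : Type*} [NormedAddCommGroup E]
    [NormedSpace ℂ E] {F : ℂ × ℂ → E} (hR : 0 ≤ R)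
    (hF : ContinuousOn F (sphere p.1 R ×ˢ sphere p.2 R)) :
    (∮ z in C(p.1, R), ∮ w in C(p.2, R), F (z, w)) =
      ∫ θ in Icc 0 (2 * π) ×ˢ Icc 0 (2 * π),
        (deriv (circleMap p.1 R) θ.1 * deriv (circleMap p.2 R) θ.2) •
          F (circleMap p.1 R θ.1, circleMap p.2 R θ.2) := by
  have hcont : Continuous fun θ : ℝ × ℝ ↦
      (deriv (circleMap p.1 R) θ.1 * deriv (circleMap p.2 R) θ.2) •
        F (circleMap p.1 R θ.1, circleMap p.2 R θ.2) :=
    Continuous.smul (by simp only [deriv_circleMap]; fun_prop)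
      (hF.comp_continuous (by fun_prop) fun θ ↦
        ⟨circleMap_mem_sphere _ hR _, circleMap_mem_sphere _ hR _⟩)
  rw [Measure.volume_eq_prod, setIntegral_prod _
    (hcont.continuousOn.integrableOn_compact (isCompact_Icc.prod isCompact_Icc)),
    circleIntegral_def_Icc]
  refine setIntegral_congr_fun measurableSet_Icc fun θ _ ↦ ?_
  simp only [circleIntegral_def_Icc, ← integral_smul, smul_smul]

theorem circleIntegral_circleIntegral_cauchyKernel (hf : DifferentiableOn ℂ f (closedBall p R))
    (hx : x ∈ ball p R) :
    (∮ z in C(p.1, R), ∮ w in C(p.2, R), cauchyKernel 1 1 z w x * f (z, w)) =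
      (2 * π * Complex.I) ^ 2 * f x := by
  have hR : 0 < R := dist_nonneg.trans_lt (mem_ball.mp hx)
  rw [mem_ball, Prod.dist_eq, max_lt_iff] at hx
  have hslice₁ : DiffContOnCl ℂ (fun z ↦ f (z, x.2)) (ball p.1 R) := by
    refine DifferentiableOn.diffContOnCl ?_
    rw [closure_ball _ hR.ne']
    exact hf.comp (differentiableOn_id.prodMk (differentiableOn_const _)) fun z hz ↦
      by rw [← closedBall_prod_same]; exact ⟨hz, mem_closedBall.mpr hx.2.le⟩
  have hslice₂ : ∀ z ∈ sphere p.1 R, DiffContOnCl ℂ (fun w ↦ f (z, w)) (ball p.2 R) := by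
    intro z hz
    refine DifferentiableOn.diffContOnCl ?_
    rw [closure_ball _ hR.ne']
    exact hf.comp ((differentiableOn_const _).prodMk differentiableOn_id) fun w hw ↦
      by rw [← closedBall_prod_same]; exact ⟨sphere_subset_closedBall hz, hw⟩
  have hinner : EqOn (fun z ↦ ∮ w in C(p.2, R), cauchyKernel 1 1 z w x * f (z, w))
      (fun z ↦ (2 * π * Complex.I) • ((z - x.1)⁻¹ • f (z, x.2))) (sphere p.1 R) := by
    intro z hz
    calc (∮ w in C(p.2, R), cauchyKernel 1 1 z w x * f (z, w))
        = ∮ w in C(p.2, R), (z - x.1)⁻¹ • ((w - x.2)⁻¹ • f (z, w)) := by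
          simp only [cauchyKernel, pow_one, smul_eq_mul, mul_assoc]
      _ = (2 * π * Complex.I) • ((z - x.1)⁻¹ • f (z, x.2)) := by
          rw [circleIntegral.integral_smul,
            (hslice₂ z hz).circleIntegral_sub_inv_smul (mem_ball.mpr hx.2), smul_comm]
  rw [circleIntegral.integral_congr hR.le hinner, circleIntegral.integral_smul,
    hslice₁.circleIntegral_sub_inv_smul (mem_ball.mpr hx.1), smul_smul, smul_eq_mul, sq]

/-- `∮∮ f(z, w) (z - x₁)⁻ᵐ (w - x₂)⁻ⁿ dz dw` over the torus `|z - p₁| = |w - p₂| = R`,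
written as an integral over `[0, 2π]²`. -/
def torusCauchyIntegral (f : ℂ × ℂ → ℂ) (p : ℂ × ℂ) (R : ℝ) : ℕ → ℕ → ℂ × ℂ → ℂ :=
  cauchyPowerIntegral (volume.restrict (Icc 0 (2 * π) ×ˢ Icc 0 (2 * π)))
    (fun θ ↦ deriv (circleMap p.1 R) θ.1 * deriv (circleMap p.2 R) θ.2 *
      f (circleMap p.1 R θ.1, circleMap p.2 R θ.2))
    (fun θ ↦ circleMap p.1 R θ.1) (fun θ ↦ circleMap p.2 R θ.2)

theorem hasFDerivAt_torusCauchyIntegral (hf : ContinuousOn f (closedBall p R))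
    (hx : x ∈ ball p R) (m n : ℕ) :
    HasFDerivAt (torusCauchyIntegral f p R m n)
      ((m * torusCauchyIntegral f p R (m + 1) n x) • fst ℂ ℂ ℂ +
        (n * torusCauchyIntegral f p R m (n + 1) x) • snd ℂ ℂ ℂ) x := by
  have hR : 0 ≤ R := dist_nonneg.trans (mem_ball.mp hx).le
  have hg : Continuous fun θ : ℝ × ℝ ↦ deriv (circleMap p.1 R) θ.1 *
      deriv (circleMap p.2 R) θ.2 * f (circleMap p.1 R θ.1, circleMap p.2 R θ.2) :=
    Continuous.mul (by simp only [deriv_circleMap]; fun_prop)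
      (hf.comp_continuous (by fun_prop) fun θ ↦ sphere_prod_sphere_subset_closedBall p R
        ⟨circleMap_mem_sphere _ hR _, circleMap_mem_sphere _ hR _⟩)
  exact hasFDerivAt_cauchyPowerIntegral
    (hg.continuousOn.integrableOn_compact (isCompact_Icc.prod isCompact_Icc))
    (by fun_prop) (by fun_prop) (fun θ ↦ (mem_sphere.mp (circleMap_mem_sphere _ hR _)).ge)
    (fun θ ↦ (mem_sphere.mp (circleMap_mem_sphere _ hR _)).ge) hx m n

theorem torusCauchyIntegral_one_one (hf : DifferentiableOn ℂ f (closedBall p R))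
    (hx : x ∈ ball p R) : torusCauchyIntegral f p R 1 1 x = (2 * π * Complex.I) ^ 2 * f x := by
  have hR : 0 ≤ R := dist_nonneg.trans (mem_ball.mp hx).le
  have hx' := hx
  rw [mem_ball, Prod.dist_eq, max_lt_iff] at hx'
  have hK : ContinuousOn (fun zw : ℂ × ℂ ↦ cauchyKernel 1 1 zw.1 zw.2 x)
      (sphere p.1 R ×ˢ sphere p.2 R) :=
    (continuousOn_cauchyKernel 1 1 x).mono fun zw ⟨hz, hw⟩ ↦
      ⟨fun h ↦ (mem_sphere.mp hz).not_lt (h ▸ hx'.1), fun h ↦ (mem_sphere.mp hw).not_lt (h ▸ hx'.2)⟩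
  rw [← circleIntegral_circleIntegral_cauchyKernel hf hx,
    circleIntegral_circleIntegral_eq_setIntegral (F := fun zw ↦ cauchyKernel 1 1 zw.1 zw.2 x * f zw)
      hR (hK.mul (hf.continuousOn.mono (sphere_prod_sphere_subset_closedBall p R)))]
  refine integral_congr_ae (ae_of_all _ fun θ ↦ ?_)
  simp only [smul_eq_mul]
  ring

theorem DifferentiableOn.differentiableAt_fderiv {s : Set (ℂ × ℂ)}
    (hf : DifferentiableOn ℂ f s) (hs : IsOpen s) (hp : p ∈ s) :
    DifferentiableAt ℂ (fderiv ℂ f) p := by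
  obtain ⟨R, hR, hRs⟩ := nhds_basis_closedBall.mem_iff.mp (hs.mem_nhds hp)
  have hfR : DifferentiableOn ℂ f (closedBall p R) := hf.mono hRs
  have hc : (2 * π * Complex.I : ℂ) ^ 2 ≠ 0 := by simp [Real.pi_ne_zero, Complex.I_ne_zero]
  have hderiv : fderiv ℂ f =ᶠ[𝓝 p] fun x ↦
      ((2 * π * Complex.I) ^ 2)⁻¹ • (torusCauchyIntegral f p R 2 1 x • fst ℂ ℂ ℂ +
        torusCauchyIntegral f p R 1 2 x • snd ℂ ℂ ℂ) := by
    filter_upwards [ball_mem_nhds p hR] with x hx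
    have hfJ : f =ᶠ[𝓝 x] fun y ↦ ((2 * π * Complex.I) ^ 2)⁻¹ * torusCauchyIntegral f p R 1 1 y :=
      eventuallyEq_of_mem (isOpen_ball.mem_nhds hx) fun y hy ↦ by
        rw [torusCauchyIntegral_one_one hfR hy, inv_mul_cancel_left₀ hc]
    rw [(((hasFDerivAt_torusCauchyIntegral hfR.continuousOn hx 1 1).const_mul _)
      |>.congr_of_eventuallyEq hfJ).fderiv]
    simp
  have hJ := fun m n ↦
    (hasFDerivAt_torusCauchyIntegral hfR.continuousOn (mem_ball_self hR) m n).differentiableAt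
  refine DifferentiableAt.congr_of_eventuallyEq ?_ hderiv
  exact (((hJ 2 1).smul_const (fst ℂ ℂ ℂ)).add ((hJ 1 2).smul_const (snd ℂ ℂ ℂ))).const_smul
    ((2 * π * Complex.I) ^ 2)⁻¹

end Regularity

section Variety

open MvPolynomial

variable {ω x : ℂ × ℂ} {z : ℂ}

theorem isOpen_openBidisk : IsOpen openBidisk :=
  (isOpen_lt (continuous_norm.comp continuous_fst) continuous_const).inter
    (isOpen_lt (continuous_norm.comp continuous_snd) continuous_const)

theorem isClosed_closedBidisk : IsClosed closedBidisk :=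
  (isClosed_le (continuous_norm.comp continuous_fst) continuous_const).inter
    (isClosed_le (continuous_norm.comp continuous_snd) continuous_const)

theorem openBidisk_subset_closedBidisk : openBidisk ⊆ closedBidisk := fun _ h ↦ ⟨h.1.le, h.2.le⟩

theorem isClosed_zeroSet (q : MvPolynomial (Fin 2) ℂ) : IsClosed (zeroSet q) :=
  isClosed_eq ((MvPolynomial.continuous_eval q).comp (by fun_prop)) continuous_const

def curve (ω : ℂ × ℂ) (z : ℂ) : ℂ × ℂ := (mobius ω.1 z, mobius ω.2 z)

def varietyDen (ω : ℂ × ℂ) (z : ℂ) : ℂ := 1 - conj ω.2 * ω.1 + (conj ω.2 - conj ω.1) * z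

def varietyNum (ω : ℂ × ℂ) (z : ℂ) : ℂ := ω.2 - ω.1 + (1 - ω.2 * conj ω.1) * z

/-- `varietyDen ω z * w - varietyNum ω z`. Its zero set is the graph of the disc automorphism
`mobius ω.2 ∘ mobius (-ω.1)`, that is, the image of `curve ω`. -/
def varietyPoly (ω : ℂ × ℂ) : MvPolynomial (Fin 2) ℂ :=
  (C (1 - conj ω.2 * ω.1) + C (conj ω.2 - conj ω.1) * X 0) * X 1 -
    (C (ω.2 - ω.1) + C (1 - ω.2 * conj ω.1) * X 0)

theorem mem_zeroSet_varietyPoly : x ∈ zeroSet (varietyPoly ω) ↔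
    varietyDen ω x.1 * x.2 = varietyNum ω x.1 := by
  simp [zeroSet, varietyPoly, varietyDen, varietyNum, sub_eq_zero]

theorem curve_mem_zeroSet_inter_openBidisk (hω : ω ∈ openBidisk) (hz : ‖z‖ < 1) :
    curve ω z ∈ zeroSet (varietyPoly ω) ∩ openBidisk := by
  have h₁ := one_add_conj_mul_ne_zero hω.1 hz.le
  have h₂ := one_add_conj_mul_ne_zero hω.2 hz.le
  refine ⟨mem_zeroSet_varietyPoly.mpr ?_, norm_mobius_lt_one hω.1 hz, norm_mobius_lt_one hω.2 hz⟩
  simp only [curve, mobius, varietyDen, varietyNum]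
  field_simp
  ring

theorem norm_varietyDen_sq_sub_norm_varietyNum_sq (ω : ℂ × ℂ) (z : ℂ) :
    ‖varietyDen ω z‖ ^ 2 - ‖varietyNum ω z‖ ^ 2 =
      (1 - ‖ω.1‖ ^ 2) * (1 - ‖ω.2‖ ^ 2) * (1 - ‖z‖ ^ 2) := by
  apply Complex.ofReal_injective
  push_cast
  simp only [varietyDen, varietyNum, ← Complex.mul_conj', map_add, map_sub, map_mul, map_one,
    Complex.conj_conj]
  ring

theorem varietyDen_ne_zero (hω : ω ∈ openBidisk) (hz : ‖z‖ ≤ 1) : varietyDen ω z ≠ 0 := by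
  have hpos : 0 < ‖1 + conj (-ω.1) * z‖ :=
    norm_pos_iff.mpr (one_add_conj_mul_ne_zero (by rw [norm_neg]; exact hω.1) hz)
  have hle : ‖z + -ω.1‖ ≤ ‖1 + conj (-ω.1) * z‖ := by
    have := norm_one_add_conj_mul_sq_sub_norm_add_sq (-ω.1) z
    rw [norm_neg] at this
    have : 0 ≤ (1 - ‖ω.1‖ ^ 2) * (1 - ‖z‖ ^ 2) :=
      mul_nonneg (by nlinarith [norm_nonneg ω.1, hω.1]) (by nlinarith [norm_nonneg z])
    exact (sq_le_sq₀ (norm_nonneg _) (norm_nonneg _)).mp (by linarith)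
  -- `varietyDen ω z = (1 - conj ω.1 * z) + conj ω.2 * (z - ω.1)`, where the first term dominates.
  intro h
  unfold varietyDen at h
  have hsplit : 1 + conj (-ω.1) * z = -(conj ω.2 * (z + -ω.1)) := by
    rw [map_neg]; linear_combination h
  rw [hsplit, norm_neg, norm_mul, Complex.norm_conj] at hpos hle
  have hω₂ : ‖ω.2‖ < 1 := hω.2
  nlinarith [mul_pos (sub_pos.mpr hω₂) (pos_of_mul_pos_right hpos (norm_nonneg _))]

theorem norm_fst_eq_one_iff_norm_snd_eq_one (hω : ω ∈ openBidisk)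
    (hx : x ∈ zeroSet (varietyPoly ω)) (hx₁ : ‖x.1‖ ≤ 1) : ‖x.1‖ = 1 ↔ ‖x.2‖ = 1 := by
  have hD := norm_pos_iff.mpr (varietyDen_ne_zero hω hx₁)
  have hid := norm_varietyDen_sq_sub_norm_varietyNum_sq ω x.1
  rw [← mem_zeroSet_varietyPoly.mp hx, norm_mul] at hid
  have hc : 0 < (1 - ‖ω.1‖ ^ 2) * (1 - ‖ω.2‖ ^ 2) :=
    mul_pos (by nlinarith [norm_nonneg ω.1, hω.1]) (by nlinarith [norm_nonneg ω.2, hω.2])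
  rw [← pow_eq_one_iff_of_nonneg (norm_nonneg x.1) two_ne_zero,
    ← pow_eq_one_iff_of_nonneg (norm_nonneg x.2) two_ne_zero]
  constructor <;> intro h
  · rw [h, sub_self, mul_zero, mul_pow] at hid
    nlinarith [pow_pos hD 2]
  · rw [mul_pow, h] at hid
    nlinarith

theorem closure_zeroSet_varietyPoly_inter_frontier_subset_torus (hω : ω ∈ openBidisk) :
    closure (zeroSet (varietyPoly ω) ∩ openBidisk) ∩ frontier openBidisk ⊆ torus := by
  rintro x ⟨hx_cl, hx_fr⟩
  obtain ⟨hxV, hx₁, hx₂⟩ : x ∈ zeroSet (varietyPoly ω) ∩ closedBidisk :=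
    closure_minimal (inter_subset_inter_right _ openBidisk_subset_closedBidisk)
      ((isClosed_zeroSet _).inter isClosed_closedBidisk) hx_cl
  have hx_open : x ∉ openBidisk := by
    rw [← isOpen_openBidisk.interior_eq]; exact hx_fr.2
  have hiff := norm_fst_eq_one_iff_norm_snd_eq_one hω hxV hx₁
  by_cases h₁ : ‖x.1‖ = 1
  · exact ⟨h₁, hiff.mp h₁⟩
  · have h₂ : ‖x.2‖ = 1 := by
      by_contra h₂
      exact hx_open ⟨hx₁.lt_of_ne h₁, hx₂.lt_of_ne h₂⟩
    exact ⟨hiff.mpr h₂, h₂⟩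

end Variety

section CurveDerivatives

variable {ω : ℂ × ℂ} {f : ℂ × ℂ → ℂ}

theorem curve_zero (ω : ℂ × ℂ) : curve ω 0 = ω := by simp [curve, mobius_zero]

theorem differentiableAt_curve (hω : ω ∈ openBidisk) {z : ℂ} (hz : ‖z‖ ≤ 1) :
    DifferentiableAt ℂ (curve ω) z :=
  (differentiableAt_mobius hω.1 hz).prodMk (differentiableAt_mobius hω.2 hz)

theorem deriv_curve_zero (hω : ω ∈ openBidisk) :
    deriv (curve ω) 0 = ((1 - ‖ω.1‖ ^ 2 : ℂ), (1 - ‖ω.2‖ ^ 2 : ℂ)) := by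
  have h₁ := (differentiableAt_mobius hω.1 (by simp)).hasDerivAt (x := 0)
  have h₂ := (differentiableAt_mobius hω.2 (by simp)).hasDerivAt (x := 0)
  rw [show deriv (curve ω) 0 = _ from (h₁.prodMk h₂).deriv, deriv_mobius_zero hω.1,
    deriv_mobius_zero hω.2]

theorem hasDerivAt_deriv_curve_zero (hω : ω ∈ openBidisk) :
    HasDerivAt (deriv (curve ω))
      (-2 * conj ω.1 * (1 - ‖ω.1‖ ^ 2), -2 * conj ω.2 * (1 - ‖ω.2‖ ^ 2)) 0 := by
  refine ((hasDerivAt_deriv_mobius_zero hω.1).prodMk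
    (hasDerivAt_deriv_mobius_zero hω.2)).congr_of_eventuallyEq ?_
  filter_upwards [ball_mem_nhds (0 : ℂ) one_pos] with z hz
  have hz' := (mem_ball_zero_iff.mp hz).le
  exact ((differentiableAt_mobius hω.1 hz').hasDerivAt.prodMk
    (differentiableAt_mobius hω.2 hz').hasDerivAt).deriv

theorem mapsTo_curve (hω : ω ∈ openBidisk) : MapsTo (curve ω) (ball 0 1) openBidisk :=
  fun _ hz ↦ (curve_mem_zeroSet_inter_openBidisk hω (mem_ball_zero_iff.mp hz)).2

theorem differentiableOn_comp_curve (hω : ω ∈ openBidisk)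
    (hf : DifferentiableOn ℂ f openBidisk) : DifferentiableOn ℂ (f ∘ curve ω) (ball 0 1) :=
  hf.comp (fun _ hz ↦
    (differentiableAt_curve hω (mem_ball_zero_iff.mp hz).le).differentiableWithinAt)
    (mapsTo_curve hω)

theorem deriv_comp_curve_zero (hω : ω ∈ openBidisk) (hf : DifferentiableOn ℂ f openBidisk) :
    deriv (f ∘ curve ω) 0 = fderiv ℂ f ω ((1 - ‖ω.1‖ ^ 2 : ℂ), (1 - ‖ω.2‖ ^ 2 : ℂ)) := by
  have hf_ω : DifferentiableAt ℂ f (curve ω 0) := by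
    rw [curve_zero]; exact hf.differentiableAt (isOpen_openBidisk.mem_nhds hω)
  rw [fderiv_comp_deriv 0 hf_ω (differentiableAt_curve hω (by simp)), curve_zero,
    deriv_curve_zero hω]

theorem deriv_deriv_comp_curve_zero (hω : ω ∈ openBidisk) (hf : DifferentiableOn ℂ f openBidisk) :
    deriv (deriv (f ∘ curve ω)) 0 =
      fderiv ℂ (fderiv ℂ f) ω ((1 - ‖ω.1‖ ^ 2 : ℂ), (1 - ‖ω.2‖ ^ 2 : ℂ))
          ((1 - ‖ω.1‖ ^ 2 : ℂ), (1 - ‖ω.2‖ ^ 2 : ℂ)) +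
        fderiv ℂ f ω (-2 * conj ω.1 * (1 - ‖ω.1‖ ^ 2), -2 * conj ω.2 * (1 - ‖ω.2‖ ^ 2)) := by
  have hf_ev : ∀ᶠ y in 𝓝 (curve ω 0), DifferentiableAt ℂ f y := by
    rw [curve_zero]
    exact eventually_of_mem (isOpen_openBidisk.mem_nhds hω) fun y hy ↦
      hf.differentiableAt (isOpen_openBidisk.mem_nhds hy)
  have hcurve_ev : ∀ᶠ z in 𝓝 (0 : ℂ), DifferentiableAt ℂ (curve ω) z :=
    eventually_of_mem (ball_mem_nhds 0 one_pos) fun z hz ↦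
      differentiableAt_curve hω (mem_ball_zero_iff.mp hz).le
  rw [deriv_deriv_comp_of_fderiv hf_ev
    (by rw [curve_zero]; exact hf.differentiableAt_fderiv isOpen_openBidisk hω) hcurve_ev
    (hasDerivAt_deriv_curve_zero hω).differentiableAt, curve_zero, deriv_curve_zero hω,
    (hasDerivAt_deriv_curve_zero hω).deriv]

end CurveDerivatives

theorem apply_mk_eq_e {M : Type*} [NormedAddCommGroup M] [NormedSpace ℂ M]
    (T : ℂ × ℂ →L[ℂ] M) (x y : ℂ) : T (x, y) = x • T (e 0) + y • T (e 1) := by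
  rw [← map_smul, ← map_smul, ← map_add]
  simp [e]

/-- **A second-order Schwarz–Pick inequality on a distinguished variety of the bidisk.** -/
theorem schwarz_pick_distinguished_variety_second_order (ω : ℂ × ℂ) (hω : ω ∈ openBidisk) :
    ∃ q : MvPolynomial (Fin 2) ℂ,
      (zeroSet q ∩ openBidisk).Nonempty ∧
      closure (zeroSet q ∩ openBidisk) ∩ frontier openBidisk ⊆ torus ∧
      ∀ f : ℂ × ℂ → ℂ, ContinuousOn f closedBidisk → DifferentiableOn ℂ f openBidisk →
        (∀ z ∈ zeroSet q ∩ openBidisk, ‖f z‖ ≤ 1) →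
        ∀ (α β : Fin 2 → ℂ) (γ₁ γ₂ : ℂ),
          α 0 = 1 - (‖ω.1‖ : ℂ) ^ 2 →
          α 1 = 1 - (‖ω.2‖ : ℂ) ^ 2 →
          β 0 = -(starRingEnd ℂ) ω.1 * (1 - (‖ω.1‖ : ℂ) ^ 2) →
          β 1 = -(starRingEnd ℂ) ω.2 * (1 - (‖ω.2‖ : ℂ) ^ 2) →
          γ₁ = α 0 * fderiv ℂ f ω (e 0) + α 1 * fderiv ℂ f ω (e 1) →
          γ₂ = (1 / 2) *
              (∑ j : Fin 2, ∑ k : Fin 2,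
                α j * α k * fderiv ℂ (fderiv ℂ f) ω (e j) (e k)) +
            β 0 * fderiv ℂ f ω (e 0) + β 1 * fderiv ℂ f ω (e 1) →
          ‖γ₂ * ((1 : ℂ) - (‖f ω‖ : ℂ) ^ 2) +
              γ₁ ^ 2 * (starRingEnd ℂ) (f ω)‖ ≤
            (1 - ‖f ω‖ ^ 2) ^ 2 - ‖γ₁‖ ^ 2 := by
  refine ⟨varietyPoly ω, ⟨curve ω 0, curve_mem_zeroSet_inter_openBidisk hω (by simp)⟩,
    closure_zeroSet_varietyPoly_inter_frontier_subset_torus hω, ?_⟩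
  intro f _ hf hf_le α β γ₁ γ₂ hα₀ hα₁ hβ₀ hβ₁ hγ₁ hγ₂
  have hγ₁' : deriv (f ∘ curve ω) 0 = γ₁ := by
    rw [deriv_comp_curve_zero hω hf, hγ₁, hα₀, hα₁, apply_mk_eq_e, smul_eq_mul, smul_eq_mul]
  have hγ₂' : deriv (deriv (f ∘ curve ω)) 0 = 2 * γ₂ := by
    rw [deriv_deriv_comp_curve_zero hω hf, hγ₂, apply_mk_eq_e (fderiv ℂ (fderiv ℂ f) ω),
      apply_mk_eq_e (fderiv ℂ f ω), add_apply, smul_apply, smul_apply,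
      apply_mk_eq_e (fderiv ℂ (fderiv ℂ f) ω (e 0)), apply_mk_eq_e (fderiv ℂ (fderiv ℂ f) ω (e 1))]
    simp only [Fin.sum_univ_two, hα₀, hα₁, hβ₀, hβ₁, smul_eq_mul]
    ring
  have hmaps : MapsTo (f ∘ curve ω) (ball 0 1) (closedBall 0 1) := fun z hz ↦
    mem_closedBall_zero_iff.mpr
      (hf_le _ (curve_mem_zeroSet_inter_openBidisk hω (mem_ball_zero_iff.mp hz)))
  have key := norm_second_order_schwarz_pick_le (differentiableOn_comp_curve hω hf) hmaps
  rwa [hγ₁', hγ₂', comp_apply, curve_zero, mul_div_cancel_left₀ _ two_ne_zero] at key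

end
end

section
/- Let f : ℂ → ℂ be holomorphic on the open unit disk 𝔻 with |f(z)| ≤ 1 for all z ∈ 𝔻 and f(0) = 0, and let a_m denote the m-th Taylor coefficient of f at 0. Then for all integers n ≥ 1 and k ≥ 1: |a_{n+k}| ≤ sqrt(1 − |a_n|²) · sqrt(1 − |a_k|²). -/
/-- The `m`-th Taylor coefficient of `f` at `0`, namely `f^{(m)}(0)/m!`. -/
noncomputable def taylorCoeff (f : ℂ → ℂ) (m : ℕ) : ℂ :=
  iteratedDeriv m f 0 / (m.factorial : ℂ)

/-!
On the circle of radius `r < 1`, `g(θ) = f(r e^{iθ})` has Fourier coefficients `a_m r^m`, and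
`a_0 = f(0) = 0`. The product `g(θ) (α + c e^{ikθ})` has modulus at most `|α + c e^{ikθ}|`,
whose mean square is `|α|² + |c|²`, while its Fourier coefficients at `k` and `n + k` are
`α a_k r^k` and `(α a_{n+k} + β a_n) r^{n+k}` for `c = β r^k`. Bessel's inequality and `r → 1`
give `|α a_k|² + |α a_{n+k} + β a_n|² ≤ |α|² + |β|²`: the matrix with rows `(a_k, 0)` and
`(a_{n+k}, a_n)` is a contraction, and the bound on its corner entry is elementary.
-/

open Complex MeasureTheory AddCircle ComplexConjugate Metric Real Filter Topology

section Circle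

variable {T : ℝ} [Fact (0 < T)]

theorem fourierCoeff_mul_fourier (F : AddCircle T → ℂ) (j m : ℤ) :
    fourierCoeff (fun x => F x * fourier j x) m = fourierCoeff F (m - j) := by
  unfold fourierCoeff
  congr 1 with x
  rw [neg_sub, sub_eq_add_neg, add_comm, fourier_add, smul_eq_mul, smul_eq_mul]
  ring

theorem fourierCoeff_mul_const_add_mul_fourier {F : AddCircle T → ℂ}
    (hF : Integrable F haarAddCircle) (α c : ℂ) (j m : ℤ) :
    fourierCoeff (fun x => F x * (α + c * fourier j x)) m
      = α * fourierCoeff F m + c * fourierCoeff F (m - j) := by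
  have hsplit : (fun x => F x * (α + c * fourier j x))
      = (fun x => α * F x) + (fun x => c * (fourier j x • F x)) := by
    ext x
    simp only [Pi.add_apply, smul_eq_mul]
    ring
  rw [hsplit, fourierCoeff.add (hF.const_mul α) ((hF.fourier_smul j).const_mul c), Pi.add_apply,
    fourierCoeff.const_mul, fourierCoeff.const_mul, ← fourierCoeff_mul_fourier]
  simp only [smul_eq_mul, mul_comm]

theorem integral_fourier_of_ne_zero {j : ℤ} (hj : j ≠ 0) :
    ∫ t : AddCircle T, fourier j t ∂haarAddCircle = 0 := by
  have := congr_fun (fourierCoeff_fourier (T := T) j) 0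
  simpa [fourierCoeff, Pi.single_apply, hj.symm] using this

theorem integral_norm_const_add_mul_fourier_sq (α c : ℂ) {j : ℤ} (hj : j ≠ 0) :
    ∫ t : AddCircle T, ‖α + c * fourier j t‖ ^ 2 ∂haarAddCircle = ‖α‖ ^ 2 + ‖c‖ ^ 2 := by
  have hexpand (t : AddCircle T) : ‖α + c * fourier j t‖ ^ 2
      = ‖α‖ ^ 2 + ‖c‖ ^ 2 + 2 * RCLike.re (conj α * c * fourier j t) := by
    rw [@norm_add_sq ℂ, norm_mul, fourier_apply, Circle.norm_coe, mul_one, RCLike.inner_apply,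
      ← fourier_apply]
    ring_nf
  have hint : Integrable (fun t : AddCircle T => conj α * c * fourier j t) haarAddCircle :=
    ((map_continuous (fourier j)).integrable_of_hasCompactSupport
      (.of_compactSpace _)).const_mul _
  simp_rw [hexpand]
  rw [integral_add (integrable_const _) (hint.re.const_mul 2), integral_const_mul,
    integral_re hint, integral_const_mul, integral_fourier_of_ne_zero hj]
  simp

theorem sum_sq_norm_fourierCoeff_le_integral {u : AddCircle T → ℂ}
    (hu : MemLp u 2 haarAddCircle) (s : Finset ℤ) :
    ∑ i ∈ s, ‖fourierCoeff u i‖ ^ 2 ≤ ∫ t, ‖u t‖ ^ 2 ∂haarAddCircle := by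
  have hparseval := hasSum_sq_fourierCoeff hu.toLp
  rw [fourierCoeff_congr_ae hu.coeFn_toLp] at hparseval
  refine (sum_le_hasSum s (fun i _ => sq_nonneg _) hparseval).trans_eq (integral_congr_ae ?_)
  filter_upwards [hu.coeFn_toLp] with t ht
  rw [ht]

theorem norm_sq_add_norm_sq_fourierCoeff_le {g : AddCircle T → ℂ} (hg : Continuous g)
    (hg1 : ∀ x, ‖g x‖ ≤ 1) (hg0 : fourierCoeff g 0 = 0) {k m : ℤ} (hk : k ≠ 0) (hkm : k ≠ m)
    (α c : ℂ) :
    ‖α * fourierCoeff g k‖ ^ 2 + ‖α * fourierCoeff g m + c * fourierCoeff g (m - k)‖ ^ 2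
      ≤ ‖α‖ ^ 2 + ‖c‖ ^ 2 := by
  set w : AddCircle T → ℂ := fun x => α + c * fourier k x
  have hw : Continuous w := by fun_prop
  have hu : Continuous (fun x => g x * w x) := hg.mul hw
  have hcoeff (i : ℤ) : fourierCoeff (fun x => g x * w x) i
      = α * fourierCoeff g i + c * fourierCoeff g (i - k) :=
    fourierCoeff_mul_const_add_mul_fourier
      (hg.integrable_of_hasCompactSupport (.of_compactSpace _)) α c k i
  calc _ = ∑ i ∈ {k, m}, ‖fourierCoeff (fun x => g x * w x) i‖ ^ 2 := by
        rw [Finset.sum_pair hkm, hcoeff, hcoeff, sub_self, hg0, mul_zero, add_zero]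
    _ ≤ ∫ t, ‖g t * w t‖ ^ 2 ∂haarAddCircle :=
        sum_sq_norm_fourierCoeff_le_integral
          (hu.memLp_of_hasCompactSupport (.of_compactSpace _)) _
    _ ≤ ∫ t, ‖w t‖ ^ 2 ∂haarAddCircle := by
        refine integral_mono ((hu.norm.pow 2).integrable_of_hasCompactSupport (.of_compactSpace _))
          ((hw.norm.pow 2).integrable_of_hasCompactSupport (.of_compactSpace _)) ?_
        intro t
        simp only [norm_mul]
        exact pow_le_pow_left₀ (by positivity) (mul_le_of_le_one_left (norm_nonneg _) (hg1 t)) 2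
    _ = ‖α‖ ^ 2 + ‖c‖ ^ 2 := integral_norm_const_add_mul_fourier_sq α c hk

end Circle

theorem taylorCoeff_eq_circleAverage {f : ℂ → ℂ} {r : ℝ} (hr : 0 < r)
    (hf : DifferentiableOn ℂ f (closedBall 0 r)) (m : ℕ) :
    taylorCoeff f m = circleAverage (fun z => (z ^ m)⁻¹ * f z) 0 r := by
  have hintegrand : (fun z : ℂ => (z - 0)⁻¹ • ((z ^ m)⁻¹ * f z))
      = fun z => (1 / (z - 0) ^ (m + 1)) • f z := by
    ext z
    simp only [sub_zero, smul_eq_mul, pow_succ, one_div, mul_inv]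
    ring
  rw [circleAverage_eq_circleIntegral hr.ne', hintegrand,
    hf.circleIntegral_one_div_sub_center_pow_smul hr m, taylorCoeff, smul_smul, smul_eq_mul]
  field_simp [two_pi_I_ne_zero]

instance : Fact (0 < 2 * π) := ⟨two_pi_pos⟩

theorem fourierCoeff_comp_circle_eq_circleAverage (h : ℂ → ℂ) {r : ℝ} (hr : r ≠ 0) (m : ℕ) :
    fourierCoeff (fun x : AddCircle (2 * π) => h (r * fourier 1 x)) m
      = r ^ m * circleAverage (fun z => (z ^ m)⁻¹ * h z) 0 r := by
  have hintegral :
      ∫ θ in 0..2 * π, fourier (-(m : ℤ)) (θ : AddCircle (2 * π))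
        • h (r * fourier 1 (θ : AddCircle (2 * π)))
      = r ^ m * ∫ θ in 0..2 * π, (circleMap 0 r θ ^ m)⁻¹ * h (circleMap 0 r θ) := by
    rw [← intervalIntegral.integral_const_mul]
    congr 1 with θ
    have hexp (n : ℤ) : cexp (2 * π * I * n * θ / ↑(2 * π)) = cexp (θ * I) ^ n := by
      rw [← exp_int_mul]
      congr 1
      push_cast
      field_simp
    have hr' : (r : ℂ) ≠ 0 := ofReal_ne_zero.mpr hr
    simp only [fourier_coe_apply, circleMap_zero, smul_eq_mul, hexp, zpow_one, zpow_neg,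
      zpow_natCast, mul_pow, mul_inv]
    field_simp
  rw [fourierCoeff_eq_intervalIntegral _ _ 0, zero_add, hintegral, circleAverage_def, one_div,
    mul_smul_comm]

theorem norm_sq_add_norm_sq_taylorCoeff_mul_pow_le {f : ℂ → ℂ} {r : ℝ} (hr : 0 < r)
    (hf : DifferentiableOn ℂ f (closedBall 0 r)) (hb : ∀ z ∈ sphere (0 : ℂ) r, ‖f z‖ ≤ 1)
    (h0 : f 0 = 0) {n k : ℕ} (hn : n ≠ 0) (hk : k ≠ 0) (α c : ℂ) :
    ‖α * (taylorCoeff f k * r ^ k)‖ ^ 2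
        + ‖α * (taylorCoeff f (n + k) * r ^ (n + k)) + c * (taylorCoeff f n * r ^ n)‖ ^ 2
      ≤ ‖α‖ ^ 2 + ‖c‖ ^ 2 := by
  set g : AddCircle (2 * π) → ℂ := fun x => f (r * fourier 1 x)
  have hsphere (x : AddCircle (2 * π)) : (r : ℂ) * fourier 1 x ∈ sphere (0 : ℂ) r := by
    simp [fourier_apply, Circle.norm_coe, abs_of_pos hr]
  have hcoeff (m : ℕ) : fourierCoeff g m = taylorCoeff f m * r ^ m := by
    rw [fourierCoeff_comp_circle_eq_circleAverage f hr.ne', taylorCoeff_eq_circleAverage hr hf,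
      mul_comm]
  have hg : Continuous g := hf.continuousOn.comp_continuous (by fun_prop)
    fun x => sphere_subset_closedBall (hsphere x)
  have hg0 : fourierCoeff g 0 = 0 := by
    simpa [taylorCoeff, h0] using hcoeff 0
  have hsub : ((n + k : ℕ) : ℤ) - k = n := by push_cast; ring
  have := norm_sq_add_norm_sq_fourierCoeff_le hg (fun x => hb _ (hsphere x)) hg0
    (Int.natCast_ne_zero.mpr hk) (m := (n + k : ℕ)) (by omega) α c
  rwa [hsub, hcoeff, hcoeff, hcoeff] at this

theorem norm_sq_add_norm_sq_taylorCoeff_le {f : ℂ → ℂ}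
    (hf : DifferentiableOn ℂ f (ball 0 1)) (hb : ∀ z ∈ ball (0 : ℂ) 1, ‖f z‖ ≤ 1)
    (h0 : f 0 = 0) {n k : ℕ} (hn : n ≠ 0) (hk : k ≠ 0) (α β : ℂ) :
    ‖α * taylorCoeff f k‖ ^ 2 + ‖α * taylorCoeff f (n + k) + β * taylorCoeff f n‖ ^ 2
      ≤ ‖α‖ ^ 2 + ‖β‖ ^ 2 := by
  set φ : ℝ → ℝ := fun r => ‖α * taylorCoeff f k * r ^ k‖ ^ 2
    + ‖(α * taylorCoeff f (n + k) + β * taylorCoeff f n) * r ^ (n + k)‖ ^ 2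
  have hφ : Tendsto φ (𝓝[<] 1) (𝓝 (φ 1)) :=
    (Continuous.tendsto (by fun_prop) 1).mono_left nhdsWithin_le_nhds
  have hφ1 : φ 1 = ‖α * taylorCoeff f k‖ ^ 2
      + ‖α * taylorCoeff f (n + k) + β * taylorCoeff f n‖ ^ 2 := by
    simp [φ]
  refine le_of_tendsto (hφ1 ▸ hφ) ?_
  filter_upwards [Ioo_mem_nhdsLT (zero_lt_one' ℝ)] with r ⟨hr0, hr1⟩
  have hball : closedBall (0 : ℂ) r ⊆ ball 0 1 := closedBall_subset_ball hr1
  have hβ : ‖β * r ^ k‖ ≤ ‖β‖ := by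
    rw [norm_mul, norm_pow, norm_real, Real.norm_eq_abs, abs_of_pos hr0]
    exact mul_le_of_le_one_right (norm_nonneg β) (pow_le_one₀ hr0.le hr1.le)
  calc φ r = ‖α * (taylorCoeff f k * r ^ k)‖ ^ 2
        + ‖α * (taylorCoeff f (n + k) * r ^ (n + k))
          + β * r ^ k * (taylorCoeff f n * r ^ n)‖ ^ 2 := by
        simp only [φ]
        ring_nf
    _ ≤ ‖α‖ ^ 2 + ‖β * r ^ k‖ ^ 2 :=
        norm_sq_add_norm_sq_taylorCoeff_mul_pow_le hr0 (hf.mono hball)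
          (fun z hz => hb z (hball (sphere_subset_closedBall hz))) h0 hn hk α (β * r ^ k)
    _ ≤ ‖α‖ ^ 2 + ‖β‖ ^ 2 := by gcongr

theorem norm_le_sqrt_mul_sqrt_of_forall_norm_sq_le {x y w : ℂ}
    (h : ∀ α β : ℂ, ‖α * x‖ ^ 2 + ‖α * y + β * w‖ ^ 2 ≤ ‖α‖ ^ 2 + ‖β‖ ^ 2) :
    ‖y‖ ≤ √(1 - ‖w‖ ^ 2) * √(1 - ‖x‖ ^ 2) := by
  have hxy : ‖x‖ ^ 2 + ‖y‖ ^ 2 ≤ 1 := by simpa using h 1 0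
  have hw : ‖w‖ ^ 2 ≤ 1 := by simpa using h 0 1
  have htest (a : ℝ) : ‖y‖ ^ 2 * ((a + ‖w‖ ^ 2) ^ 2 - ‖w‖ ^ 2) ≤ a ^ 2 * (1 - ‖x‖ ^ 2) := by
    have hcomb : (a : ℂ) * y + y * conj w * w = y * (a + ‖w‖ ^ 2 : ℝ) := by
      push_cast
      rw [mul_assoc, conj_mul']
      ring
    have := h a (y * conj w)
    rw [hcomb, norm_mul, norm_mul, norm_mul, RCLike.norm_conj, norm_real, norm_real,
      Real.norm_eq_abs, Real.norm_eq_abs] at this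
    nlinarith [sq_abs a, sq_abs (a + ‖w‖ ^ 2)]
  have hsq : ‖y‖ ^ 2 ≤ (1 - ‖w‖ ^ 2) * (1 - ‖x‖ ^ 2) := by
    rcases hw.lt_or_eq with hw1 | hw1
    · have := htest (1 - ‖w‖ ^ 2)
      nlinarith
    · -- `a = ‖y‖²` forces `y = 0`
      have := htest (‖y‖ ^ 2)
      rw [hw1] at this ⊢
      nlinarith [sq_nonneg ‖x‖, sq_nonneg ‖y‖, pow_nonneg (sq_nonneg ‖y‖) 2]
  rw [← sqrt_mul (by linarith)]
  exact le_sqrt_of_sq_le hsq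

/-- **A coefficient inequality for self-maps of the disk vanishing at the origin.** -/
theorem coeff_ineq_of_map_zero_eq_zero (f : ℂ → ℂ)
    (hf : DifferentiableOn ℂ f {z : ℂ | ‖z‖ < 1})
    (hb : ∀ z : ℂ, ‖z‖ < 1 → ‖f z‖ ≤ 1)
    (h0 : f 0 = 0)
    (n k : ℕ) (hn : 1 ≤ n) (hk : 1 ≤ k) :
    ‖taylorCoeff f (n + k)‖ ≤
      Real.sqrt (1 - ‖taylorCoeff f n‖ ^ 2) *
        Real.sqrt (1 - ‖taylorCoeff f k‖ ^ 2) := by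
  have hball : ball (0 : ℂ) 1 = {z : ℂ | ‖z‖ < 1} := by ext; simp
  refine norm_le_sqrt_mul_sqrt_of_forall_norm_sq_le fun α β => ?_
  exact norm_sq_add_norm_sq_taylorCoeff_le (hball ▸ hf) (fun z hz => hb z (by simpa using hz))
    h0 (by omega) (by omega) α β
end

section
/- (Douglas factorization lemma.) Let L, M₁, M₂ be complex Hilbert spaces, let A ∈ B(L,M₁), B ∈ B(L,M₂), and let c ≥ 0. Then B*B ≤ c²·A*A (in the Loewner order on selfadjoint operators on L) if and only if there exists C ∈ B(M₁,M₂) with B = C ∘ A and ‖C‖ ≤ c. Moreover, in that case there exists a unique C₀ ∈ B(M₁,M₂) with B = C₀ ∘ A, ‖C₀‖ ≤ c, and (range A)ᗮ ⊆ ker C₀, and this C₀ satisfies ‖C₀‖ ≤ ‖C‖ for every C ∈ B(M₁,M₂) with B = C ∘ A. -/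
/-!
The Loewner inequality `B†B ≤ c² A†A`, tested on `⟪·x, x⟫`, says exactly `‖B x‖ ≤ c ‖A x‖`.
Then `A x ↦ B x` is a well-defined map on `range A` of norm at most `c`; extend it by continuity
to `K = closure (range A)` and by `0` on `Kᗮ = (range A)ᗮ`. Every factor `C` of `B` through `A`
agrees with this `C₀` on `K`, i.e. `C₀ = C ∘ P_K`, which gives both `‖C₀‖ ≤ ‖C‖` and uniqueness
among the factors vanishing on `(range A)ᗮ`.
-/

open ContinuousLinearMap

namespace ContinuousLinearMap

section Loewner

variable {E F G : Type*} [NormedAddCommGroup E] [NormedAddCommGroup F] [NormedAddCommGroup G]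
  [InnerProductSpace ℂ E] [InnerProductSpace ℂ F] [InnerProductSpace ℂ G]
  [CompleteSpace E] [CompleteSpace F] [CompleteSpace G]

theorem adjoint_comp_self_le_smul_iff (A : E →L[ℂ] F) (B : E →L[ℂ] G)
    {c : ℝ} (hc : 0 ≤ c) :
    adjoint B ∘L B ≤ (c ^ 2 : ℝ) • (adjoint A ∘L A) ↔ ∀ x, ‖B x‖ ≤ c * ‖A x‖ := by
  have hinner : ∀ x, inner ℂ (((c ^ 2 : ℝ) • (adjoint A ∘L A) - adjoint B ∘L B) x) x =
      (((c * ‖A x‖) ^ 2 - ‖B x‖ ^ 2 : ℝ) : ℂ) := fun x => by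
    simp [adjoint_inner_left, mul_pow]
  simp_rw [le_def, isPositive_iff_complex, hinner, RCLike.re_to_complex, Complex.ofReal_re,
    sub_nonneg, true_and]
  exact forall_congr' fun x => pow_le_pow_iff_left₀ (norm_nonneg _) (by positivity) two_ne_zero

end Loewner

section Factor

variable {𝕜 E F G : Type*} [RCLike 𝕜]
  [NormedAddCommGroup E] [NormedAddCommGroup F] [NormedAddCommGroup G]
  [NormedSpace 𝕜 E] [InnerProductSpace 𝕜 F] [NormedSpace 𝕜 G]

theorem comp_starProjection_of_orthogonal_le_ker (U : Submodule 𝕜 F) [U.HasOrthogonalProjection]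
    {C : F →L[𝕜] G} (h : Uᗮ ≤ LinearMap.ker (C : F →ₗ[𝕜] G)) : C ∘L U.starProjection = C := by
  ext y
  have hker : C (y - U.starProjection y) = 0 := h (U.sub_starProjection_mem_orthogonal y)
  rwa [map_sub, sub_eq_zero, eq_comm] at hker

def closureRangeRestrict (A : E →L[𝕜] F) : E →L[𝕜] A.range.topologicalClosure :=
  A.codRestrict _ fun x => A.range.le_topologicalClosure (LinearMap.mem_range_self _ x)

@[simp]
theorem coe_closureRangeRestrict_apply (A : E →L[𝕜] F) (x : E) :
    (A.closureRangeRestrict x : F) = A x := rfl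

theorem denseRange_closureRangeRestrict (A : E →L[𝕜] F) : DenseRange A.closureRangeRestrict := by
  rw [DenseRange, Subtype.dense_iff, ← Set.range_comp]
  exact (Submodule.topologicalClosure_coe _).ge

variable [CompleteSpace F] [CompleteSpace G]

theorem orthogonalProjectionOnto_comp_eq_closureRangeRestrict (A : E →L[𝕜] F) :
    A.range.topologicalClosure.orthogonalProjectionOnto ∘L A = A.closureRangeRestrict :=
  ContinuousLinearMap.ext fun x =>
    Submodule.orthogonalProjectionOnto_mem_subspace_eq_self (A.closureRangeRestrict x)

/-- `A x ↦ B x`, extended by continuity to the closure of `range A` and by `0` on its orthogonal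
complement; junk unless `‖B x‖ ≤ c * ‖A x‖` for some `c`. -/
noncomputable def douglasFactor (A : E →L[𝕜] F) (B : E →L[𝕜] G) : F →L[𝕜] G :=
  (B : E →ₗ[𝕜] G).extendOfNorm (A.closureRangeRestrict : E →ₗ[𝕜] _) ∘L
    A.range.topologicalClosure.orthogonalProjectionOnto

variable {A : E →L[𝕜] F} {B : E →L[𝕜] G}

theorem douglasFactor_comp {c : ℝ} (h : ∀ x, ‖B x‖ ≤ c * ‖A x‖) :
    douglasFactor A B ∘L A = B := by
  ext x
  rw [douglasFactor, comp_assoc, orthogonalProjectionOnto_comp_eq_closureRangeRestrict]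
  exact LinearMap.extendOfNorm_eq A.denseRange_closureRangeRestrict ⟨c, h⟩ x

theorem norm_douglasFactor_le {c : ℝ} (hc : 0 ≤ c) (h : ∀ x, ‖B x‖ ≤ c * ‖A x‖) :
    ‖douglasFactor A B‖ ≤ c :=
  (opNorm_comp_le _ _).trans <|
    (mul_le_of_le_one_right (norm_nonneg _) (Submodule.orthogonalProjectionOnto_norm_le _)).trans
      (LinearMap.opNorm_extendOfNorm_le A.denseRange_closureRangeRestrict hc h)

theorem orthogonal_range_le_ker_douglasFactor :
    (LinearMap.range (A : E →ₗ[𝕜] F))ᗮ ≤ LinearMap.ker (douglasFactor A B : F →ₗ[𝕜] G) := by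
  intro y hy
  rw [← Submodule.orthogonal_closure] at hy
  simp [douglasFactor, Submodule.orthogonalProjectionOnto_apply_of_mem_orthogonal hy]

theorem douglasFactor_eq_comp_starProjection {C : F →L[𝕜] G} (hC : B = C ∘L A) :
    douglasFactor A B = C ∘L A.range.topologicalClosure.starProjection := by
  have hext : (B : E →ₗ[𝕜] G).extendOfNorm (A.closureRangeRestrict : E →ₗ[𝕜] _) =
      C ∘L A.range.topologicalClosure.subtypeL := by
    refine LinearMap.extendOfNorm_unique A.denseRange_closureRangeRestrict ‖C‖
      (fun x => ?_) _ ?_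
    · rw [hC]; exact C.le_opNorm (A x)
    · ext x; simp [hC]
  rw [douglasFactor, hext, comp_assoc]
  rfl

theorem norm_douglasFactor_le_norm {C : F →L[𝕜] G} (hC : B = C ∘L A) :
    ‖douglasFactor A B‖ ≤ ‖C‖ := by
  rw [douglasFactor_eq_comp_starProjection hC]
  exact (opNorm_comp_le _ _).trans
    (mul_le_of_le_one_right (norm_nonneg C) (Submodule.starProjection_norm_le _))

theorem eq_douglasFactor {C : F →L[𝕜] G} (hC : B = C ∘L A)
    (hker : (LinearMap.range (A : E →ₗ[𝕜] F))ᗮ ≤ LinearMap.ker (C : F →ₗ[𝕜] G)) :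
    C = douglasFactor A B := by
  rw [douglasFactor_eq_comp_starProjection hC, comp_starProjection_of_orthogonal_le_ker]
  rwa [Submodule.orthogonal_closure]

end Factor

end ContinuousLinearMap

/-- **The Douglas factorization lemma, with minimal solution.** -/
theorem douglas_factorization {L M₁ M₂ : Type*}
    [NormedAddCommGroup L] [InnerProductSpace ℂ L] [CompleteSpace L]
    [NormedAddCommGroup M₁] [InnerProductSpace ℂ M₁] [CompleteSpace M₁]
    [NormedAddCommGroup M₂] [InnerProductSpace ℂ M₂] [CompleteSpace M₂]
    (A : L →L[ℂ] M₁) (B : L →L[ℂ] M₂) (c : ℝ) (hc : 0 ≤ c) :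
    (adjoint B ∘L B ≤ (c ^ 2 : ℝ) • (adjoint A ∘L A) ↔
      ∃ C : M₁ →L[ℂ] M₂, B = C ∘L A ∧ ‖C‖ ≤ c) ∧
    (adjoint B ∘L B ≤ (c ^ 2 : ℝ) • (adjoint A ∘L A) →
      ∃ C₀ : M₁ →L[ℂ] M₂,
        (B = C₀ ∘L A ∧ ‖C₀‖ ≤ c ∧ (LinearMap.range (A : L →ₗ[ℂ] M₁))ᗮ ≤ LinearMap.ker (C₀ : M₁ →ₗ[ℂ] M₂)) ∧
        (∀ C : M₁ →L[ℂ] M₂, B = C ∘L A → ‖C‖ ≤ c →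
          (LinearMap.range (A : L →ₗ[ℂ] M₁))ᗮ ≤ LinearMap.ker (C : M₁ →ₗ[ℂ] M₂) → C = C₀) ∧
        (∀ C : M₁ →L[ℂ] M₂, B = C ∘L A → ‖C₀‖ ≤ ‖C‖)) := by
  rw [adjoint_comp_self_le_smul_iff A B hc]
  refine ⟨⟨fun h => ⟨douglasFactor A B, (douglasFactor_comp h).symm, norm_douglasFactor_le hc h⟩,
    ?_⟩, fun h => ⟨douglasFactor A B, ?_, ?_, ?_⟩⟩
  · rintro ⟨C, rfl, hC⟩ x
    exact C.le_of_opNorm_le hC (A x)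
  · exact ⟨(douglasFactor_comp h).symm, norm_douglasFactor_le hc h,
      orthogonal_range_le_ker_douglasFactor⟩
  · exact fun C hC _ hker => eq_douglasFactor hC hker
  · exact fun C hC => norm_douglasFactor_le_norm hC
end
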